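/- arXiv:0707.0427 — 7 statements merged into one kernel-verified Lean document; each statement's English description precedes it below -/
import Mathlib

section
/- Let A and B be unital complex *-algebras equipped with linear functionals τ : A → ℂ and σ : B → ℂ satisfying τ(xy) = τ(yx), σ(xy) = σ(yx) and τ(1) = σ(1) = 1. Let x_1,…,x_n ∈ A and y_1,…,y_n ∈ B be self-adjoint elements. Assume that for every integer m ≥ 1, every n-tuple of Hermitian matrices a_1,…,a_n ∈ M_m(ℂ) and every integer j ≥ 1, one has (tr_m ⊗ τ)((a_1 ⊗ x_1 + ⋯ + a_n ⊗ x_n)^j) = (tr_m ⊗ σ)((a_1 ⊗ y_1 + ⋯ + a_n ⊗ y_n)^j). Then (x_1,…,x_n) and (y_1,…,y_n) have the same distribution: for every integer k ≥ 1 and all indices i_1,…,i_k ∈ {1,…,n}, τ(x_{i_1} x_{i_2} ⋯ x_{i_k}) = σ(y_{i_1} y_{i_2} ⋯ y_{i_k}). -/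
/-- `a ⊗ x`: the matrix with entries `a i j • x`, an element of `M_m(A)`. -/
noncomputable def matTensor {m : ℕ} {A : Type*} [Ring A] [Module ℂ A]
    (a : Matrix (Fin m) (Fin m) ℂ) (x : A) : Matrix (Fin m) (Fin m) A :=
  Matrix.of fun i j => a i j • x

/-!
Fix a word `idx : Fin k → Fin n` with `k ≥ 1` and put
`c g = τ (x_{idx (g 0)} ⋯ x_{idx (g (k-1))}) - σ (y_{idx (g 0)} ⋯ y_{idx (g (k-1))})`
for `g : Fin k → Fin k`. Applying the hypothesis with `m = j = k` to `a i = ∑_{idx p = i} h p`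
for Hermitian `h : Fin k → M_k(ℂ)` gives `∑_g tr (h (g 0) ⋯ h (g (k-1))) c g = 0`.
Replacing some of the `h p` by `0` and applying inclusion–exclusion leaves only the bijective `g`;
what remains is multilinear in `h`, and Hermitian matrices span `M_k(ℂ)`, so it vanishes for every
tuple. For the matrix units `h p = E (p, p + 1)` (indices mod `k`) the trace of
`h (e 0) ⋯ h (e (k-1))` is `1` when `e` is a rotation `q ↦ q + r` and `0` otherwise, and
traciality makes `c` constant on rotations, so `k • c id = 0`.
-/

open Finset

theorem sum_pow_eq_sum_prod_ofFn {R ι : Type*} [Semiring R] [Fintype ι] (f : ι → R) (j : ℕ) :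
    (∑ i, f i) ^ j = ∑ g : Fin j → ι, (List.ofFn fun q => f (g q)).prod := by
  simpa using (MultilinearMap.mkPiAlgebraFin ℕ j R).map_sum fun _ => f

theorem sum_surjective_eq_zero {α β G : Type*} [Fintype α] [DecidableEq α] [Fintype β]
    [DecidableEq β] [AddCommGroup G] (u : (β → α) → G)
    (hu : ∀ t : Finset α, ∑ g with ∀ b, g b ∉ t, u g = 0) :
    ∑ g with Function.Surjective g, u g = 0 := by
  let missing (p : α) : Finset (β → α) := {g | ∀ b, g b ≠ p}
  have hsurj :
      (univ.inf fun p => (missing p)ᶜ) = ({g | Function.Surjective g} : Finset (β → α)) := by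
    ext g
    simp only [missing, mem_inf, mem_compl, mem_filter, mem_univ, true_and]
    simp [Function.Surjective]
  have hinf (t : Finset α) : t.inf missing = ({g | ∀ b, g b ∉ t} : Finset (β → α)) := by
    ext g
    simp only [missing, mem_inf, mem_filter, mem_univ, true_and]
    grind
  have key := inclusion_exclusion_sum_inf_compl univ missing u
  simpa only [hsurj, hinf, hu, smul_zero, sum_const_zero] using key

theorem sum_perm_eq_sum_surjective {α M : Type*} [Fintype α] [DecidableEq α] [AddCommMonoid M]
    (F : (α → α) → M) : ∑ e : Equiv.Perm α, F e = ∑ g with Function.Surjective g, F g :=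
  sum_bij (fun e _ => ⇑e) (fun e _ => by simpa using e.surjective)
    (fun _ _ _ _ h => Equiv.coe_fn_injective h)
    (fun g hg => ⟨Equiv.ofBijective g (Finite.surjective_iff_bijective.mp (by simpa using hg)),
      by simp, rfl⟩)
    (fun _ _ => rfl)

theorem list_prod_ofFn_ite_mem {M ι : Type*} [MonoidWithZero M] [DecidableEq ι] {k : ℕ}
    (t : Finset ι) (h : ι → M) (g : Fin k → ι) :
    (List.ofFn fun q => if g q ∈ t then 0 else h (g q)).prod =
      if ∀ q, g q ∉ t then (List.ofFn fun q => h (g q)).prod else 0 := by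
  split_ifs with hg
  · simp [hg]
  · obtain ⟨q, hq⟩ := not_forall_not.mp hg
    exact List.prod_eq_zero (List.mem_ofFn.mpr ⟨q, by simp [hq]⟩)

theorem list_prod_ofFn_single {n R : Type*} [Fintype n] [DecidableEq n] [Semiring R] {k : ℕ}
    (a b : Fin (k + 1) → n) :
    (List.ofFn fun q => Matrix.single (a q) (b q) (1 : R)).prod =
      if ∀ q : Fin k, b q.castSucc = a q.succ then Matrix.single (a 0) (b (Fin.last k)) 1
      else 0 := by
  induction k with
  | zero => simp
  | succ k ih =>
    rw [List.ofFn_succ, List.prod_cons, ih]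
    simp only [Fin.forall_fin_succ (P := fun q => b q.castSucc = a q.succ), Fin.castSucc_zero,
      Fin.succ_zero_eq_one, Fin.succ_last, Fin.succ_castSucc]
    by_cases h0 : b 0 = a 1
    · split_ifs <;> simp_all [Matrix.single_mul_single_same]
    · split_ifs <;> simp_all [Matrix.single_mul_single_of_ne]

theorem trace_list_prod_ofFn_single {n R : Type*} [Fintype n] [DecidableEq n] [Semiring R]
    {k : ℕ} (a b : Fin (k + 1) → n) :
    (List.ofFn fun q => Matrix.single (a q) (b q) (1 : R)).prod.trace =
      if ∀ q, b q = a (q + 1) then 1 else 0 := by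
  simp only [list_prod_ofFn_single, Fin.forall_fin_succ' (P := fun q => b q = a (q + 1)),
    Fin.coeSucc_eq_succ, Fin.last_add_one]
  by_cases hchain : ∀ q : Fin k, b q.castSucc = a q.succ
  · by_cases hclose : b (Fin.last k) = a 0
    · simp [hchain, hclose]
    · simp [hchain, hclose, Matrix.trace_single_eq_of_ne (h := Ne.symm hclose)]
  · simp [hchain]

theorem Fin.forall_apply_add_one_iff {k : ℕ} (f : Fin (k + 1) → Fin (k + 1)) :
    (∀ q, f q + 1 = f (q + 1)) ↔ ∀ q, f q = q + f 0 := by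
  refine ⟨fun hf q => ?_, fun hf q => by rw [hf, hf (q + 1)]; abel⟩
  induction q using Fin.induction with
  | zero => simp
  | succ q ih => rw [← Fin.coeSucc_eq_succ, ← hf, ih]; abel

theorem apply_list_prod_ofFn_add_right {A M : Type*} [Monoid A] (τ : A → M)
    (hτ : ∀ x y, τ (x * y) = τ (y * x)) {k : ℕ} (z : Fin (k + 1) → A) (r : Fin (k + 1)) :
    τ (List.ofFn fun q => z (q + r)).prod = τ (List.ofFn z).prod := by
  have hrotate : (List.ofFn fun q => z (q + r)) = (List.ofFn z).rotate r := by
    refine List.ext_getElem (by simp) fun i _ _ => ?_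
    simp only [List.getElem_ofFn, List.getElem_rotate, List.length_ofFn]
    congr 1
  rw [hrotate, List.rotate_eq_drop_append_take (by simp), List.prod_append, hτ,
    ← List.prod_append, List.take_append_drop]

section MatTensor

variable {A : Type*} [Ring A] [Algebra ℂ A] {m : ℕ}

theorem matTensor_sum {ι : Type*} (s : Finset ι) (a : ι → Matrix (Fin m) (Fin m) ℂ) (z : A) :
    matTensor (∑ p ∈ s, a p) z = ∑ p ∈ s, matTensor (a p) z := by
  ext i j
  simp [matTensor, Matrix.sum_apply, sum_smul]

theorem matTensor_mul (a b : Matrix (Fin m) (Fin m) ℂ) (z w : A) :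
    matTensor a z * matTensor b w = matTensor (a * b) (z * w) := by
  ext i j
  simp only [matTensor, Matrix.mul_apply, Matrix.of_apply, sum_smul, smul_mul_smul_comm]

theorem matTensor_one : matTensor (1 : Matrix (Fin m) (Fin m) ℂ) (1 : A) = 1 := by
  ext i j
  by_cases h : i = j <;> simp [matTensor, Matrix.one_apply, h]

theorem list_prod_ofFn_matTensor {k : ℕ} (a : Fin k → Matrix (Fin m) (Fin m) ℂ)
    (z : Fin k → A) :
    (List.ofFn fun q => matTensor (a q) (z q)).prod =
      matTensor (List.ofFn a).prod (List.ofFn z).prod := by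
  induction k with
  | zero => simp [matTensor_one]
  | succ k ih => simp [List.ofFn_succ, ih, matTensor_mul]

theorem trace_matTensor (a : Matrix (Fin m) (Fin m) ℂ) (z : A) :
    (matTensor a z).trace = a.trace • z := by
  simp [matTensor, Matrix.trace, sum_smul]

theorem trace_sum_matTensor_pow {ι : Type*} [Fintype ι] (a : ι → Matrix (Fin m) (Fin m) ℂ)
    (z : ι → A) (j : ℕ) :
    ((∑ p, matTensor (a p) (z p)) ^ j).trace =
      ∑ g : Fin j → ι,
        (List.ofFn fun q => a (g q)).prod.trace • (List.ofFn fun q => z (g q)).prod := by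
  simp [sum_pow_eq_sum_prod_ofFn, Matrix.trace_sum, list_prod_ofFn_matTensor, trace_matTensor]

theorem sum_apply_pow_sum_matTensor {ι : Type*} [Fintype ι] (τ : A →ₗ[ℂ] ℂ)
    (a : ι → Matrix (Fin m) (Fin m) ℂ) (z : ι → A) (j : ℕ) :
    ∑ i, τ (((∑ p, matTensor (a p) (z p)) ^ j) i i) =
      ∑ g : Fin j → ι,
        (List.ofFn fun q => a (g q)).prod.trace * τ (List.ofFn fun q => z (g q)).prod := by
  calc ∑ i, τ (((∑ p, matTensor (a p) (z p)) ^ j) i i)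
      = τ ((∑ p, matTensor (a p) (z p)) ^ j).trace := (map_sum τ _ _).symm
    _ = _ := by simp [trace_sum_matTensor_pow]

theorem sum_matTensor_sum_fiberwise {ι κ : Type*} [Fintype ι] [Fintype κ] [DecidableEq κ]
    (f : ι → κ) (a : ι → Matrix (Fin m) (Fin m) ℂ) (z : κ → A) :
    ∑ i, matTensor (∑ p with f p = i, a p) (z i) = ∑ p, matTensor (a p) (z (f p)) := by
  rw [← sum_fiberwise univ f]
  refine sum_congr rfl fun i _ => ?_
  rw [matTensor_sum]
  exact sum_congr rfl fun p hp => by rw [(mem_filter.mp hp).2]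

end MatTensor

theorem sum_perm_trace_mul_eq_zero_of_sum_eq_zero {k m : ℕ} (c : (Fin k → Fin k) → ℂ)
    (hc : ∀ h : Fin k → Matrix (Fin m) (Fin m) ℂ, (∀ p, (h p).IsHermitian) →
      ∑ g, (List.ofFn fun q => h (g q)).prod.trace * c g = 0)
    (h : Fin k → Matrix (Fin m) (Fin m) ℂ) (hh : ∀ p, (h p).IsHermitian) :
    ∑ e : Equiv.Perm (Fin k), (List.ofFn fun q => h (e q)).prod.trace * c e = 0 := by
  rw [sum_perm_eq_sum_surjective fun g => (List.ofFn fun q => h (g q)).prod.trace * c g]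
  refine sum_surjective_eq_zero _ fun t => ?_
  have hmask : ∀ p, (if p ∈ t then 0 else h p).IsHermitian := fun p => by
    split_ifs
    exacts [Matrix.isHermitian_zero, hh p]
  rw [sum_filter]
  convert hc _ hmask using 2 with g
  simp only [list_prod_ofFn_ite_mem, apply_ite Matrix.trace, Matrix.trace_zero, ite_mul, zero_mul]
  -- the two sides differ only in the `Decidable` instance of the condition
  congr

theorem sum_perm_trace_mul_eq_zero_of_isHermitian {k m : ℕ} (c : Equiv.Perm (Fin k) → ℂ)
    (hc : ∀ h : Fin k → Matrix (Fin m) (Fin m) ℂ, (∀ p, (h p).IsHermitian) →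
      ∑ e, (List.ofFn fun q => h (e q)).prod.trace * c e = 0)
    (h : Fin k → Matrix (Fin m) (Fin m) ℂ) :
    ∑ e, (List.ofFn fun q => h (e q)).prod.trace * c e = 0 := by
  let D : MultilinearMap ℂ (fun _ : Fin k => Matrix (Fin m) (Fin m) ℂ) ℂ :=
    ∑ e, c e • (Matrix.traceLinearMap (Fin m) ℂ ℂ).compMultilinearMap
      ((MultilinearMap.mkPiAlgebraFin ℂ k _).domDomCongr e)
  have hD (h : Fin k → Matrix (Fin m) (Fin m) ℂ) :
      D h = ∑ e, (List.ofFn fun q => h (e q)).prod.trace * c e := by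
    simp [D, mul_comm]
  have hD_zero : D = 0 := MultilinearMap.ext_of_span_eq_top
    (g := fun _ (a : selfAdjoint (Matrix (Fin m) (Fin m) ℂ)) => (a : Matrix (Fin m) (Fin m) ℂ))
    (fun _ => by simpa using span_selfAdjoint)
    (fun a => by simpa [hD] using hc _ fun p => (a p).2)
  rw [← hD, hD_zero, zero_apply]

theorem sum_perm_trace_prod_single_mul {k : ℕ} (c : Equiv.Perm (Fin (k + 1)) → ℂ) :
    ∑ e, (List.ofFn fun q => Matrix.single (e q) (e q + 1) (1 : ℂ)).prod.trace * c e =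
      ∑ r, c (Equiv.addRight r) := by
  simp only [trace_list_prod_ofFn_single, Fin.forall_apply_add_one_iff, ite_mul, one_mul,
    zero_mul, ← sum_filter]
  refine sum_bij' (fun e _ => e 0) (fun r _ => Equiv.addRight r) (by simp) (by simp)
    (fun e he => ?_) (by simp) (fun e he => ?_)
  all_goals
    have hrot : Equiv.addRight (e 0) = e := Equiv.ext fun q => ((mem_filter.mp he).2 q).symm
    simp [hrot]

theorem sum_addRight_eq_zero_of_sum_trace_mul_eq_zero {k : ℕ}
    (c : (Fin (k + 1) → Fin (k + 1)) → ℂ)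
    (hc : ∀ h : Fin (k + 1) → Matrix (Fin (k + 1)) (Fin (k + 1)) ℂ,
      (∀ p, (h p).IsHermitian) → ∑ g, (List.ofFn fun q => h (g q)).prod.trace * c g = 0) :
    ∑ r, c (Equiv.addRight r) = 0 := by
  rw [← sum_perm_trace_prod_single_mul fun e => c e]
  exact sum_perm_trace_mul_eq_zero_of_isHermitian (fun e => c e)
    (sum_perm_trace_mul_eq_zero_of_sum_eq_zero c hc) fun p => Matrix.single p (p + 1) 1

theorem same_distribution_of_matrix_moments_general
    {A B : Type*} [Ring A] [Algebra ℂ A]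
    [Ring B] [Algebra ℂ B]
    (τ : A →ₗ[ℂ] ℂ) (σ : B →ₗ[ℂ] ℂ)
    (hτtr : ∀ x y : A, τ (x * y) = τ (y * x))
    (hσtr : ∀ x y : B, σ (x * y) = σ (y * x))
    (n : ℕ) (x : Fin n → A) (y : Fin n → B)
    (hmom : ∀ (m : ℕ), 1 ≤ m → ∀ a : Fin n → Matrix (Fin m) (Fin m) ℂ,
      (∀ i, (a i).IsHermitian) → ∀ j : ℕ, 1 ≤ j →
      (m : ℂ)⁻¹ * ∑ i, τ (((∑ k, matTensor (a k) (x k)) ^ j) i i) =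
      (m : ℂ)⁻¹ * ∑ i, σ (((∑ k, matTensor (a k) (y k)) ^ j) i i)) :
    ∀ (k : ℕ), 1 ≤ k → ∀ idx : Fin k → Fin n,
      τ (List.ofFn (fun j => x (idx j))).prod = σ (List.ofFn (fun j => y (idx j))).prod := by
  intro k hk idx
  obtain ⟨k, rfl⟩ : ∃ k', k = k' + 1 := ⟨k - 1, by omega⟩
  set c : (Fin (k + 1) → Fin (k + 1)) → ℂ := fun g =>
    τ (List.ofFn fun q => x (idx (g q))).prod - σ (List.ofFn fun q => y (idx (g q))).prod
  have hc (h : Fin (k + 1) → Matrix (Fin (k + 1)) (Fin (k + 1)) ℂ)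
      (hh : ∀ p, (h p).IsHermitian) :
      ∑ g, (List.ofFn fun q => h (g q)).prod.trace * c g = 0 := by
    have hmom' := hmom (k + 1) hk (fun i => ∑ p with idx p = i, h p)
      (fun i => isSelfAdjoint_sum _ fun p _ => hh p) (k + 1) hk
    rw [mul_right_inj' (inv_ne_zero (Nat.cast_ne_zero.mpr k.succ_ne_zero)),
      sum_matTensor_sum_fiberwise, sum_matTensor_sum_fiberwise, sum_apply_pow_sum_matTensor,
      sum_apply_pow_sum_matTensor] at hmom'
    simp only [c, mul_sub, sum_sub_distrib, hmom', sub_self]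
  have hrot (r : Fin (k + 1)) : c (· + r) = c id := by
    simp only [c, id, apply_list_prod_ofFn_add_right τ hτtr (fun q => x (idx q)) r,
      apply_list_prod_ofFn_add_right σ hσtr (fun q => y (idx q)) r]
  have hsum := sum_addRight_eq_zero_of_sum_trace_mul_eq_zero c hc
  simp only [Equiv.coe_addRight, hrot, sum_const, card_univ, Fintype.card_fin, nsmul_eq_mul,
    mul_eq_zero, Nat.cast_eq_zero, Nat.succ_ne_zero, false_or] at hsum
  exact sub_eq_zero.mp hsum

/-- **Linearization of distributions (Collins–Dykema / de la Salle).**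
Let `A`, `B` be unital complex `*`-algebras with unital tracial linear functionals `τ`, `σ`,
and let `x₁, …, xₙ ∈ A`, `y₁, …, yₙ ∈ B` be self-adjoint.  If for every `m ≥ 1`, every tuple
of Hermitian matrices `a₁, …, aₙ ∈ M_m(ℂ)` and every `j ≥ 1` the moments
`(tr_m ⊗ τ)((Σ aᵢ ⊗ xᵢ)^j)` and `(tr_m ⊗ σ)((Σ aᵢ ⊗ yᵢ)^j)` agree, then `(x₁, …, xₙ)` and
`(y₁, …, yₙ)` have the same distribution. -/
theorem same_distribution_of_matrix_moments
    {A B : Type*} [Ring A] [Algebra ℂ A] [StarRing A] [StarModule ℂ A]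
    [Ring B] [Algebra ℂ B] [StarRing B] [StarModule ℂ B]
    (τ : A →ₗ[ℂ] ℂ) (σ : B →ₗ[ℂ] ℂ)
    (hτtr : ∀ x y : A, τ (x * y) = τ (y * x))
    (hσtr : ∀ x y : B, σ (x * y) = σ (y * x))
    (hτ1 : τ 1 = 1) (hσ1 : σ 1 = 1)
    (n : ℕ) (x : Fin n → A) (y : Fin n → B)
    (hx : ∀ i, IsSelfAdjoint (x i)) (hy : ∀ i, IsSelfAdjoint (y i))
    (hmom : ∀ (m : ℕ), 1 ≤ m → ∀ a : Fin n → Matrix (Fin m) (Fin m) ℂ,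
      (∀ i, (a i).IsHermitian) → ∀ j : ℕ, 1 ≤ j →
      (m : ℂ)⁻¹ * ∑ i, τ (((∑ k, matTensor (a k) (x k)) ^ j) i i) =
      (m : ℂ)⁻¹ * ∑ i, σ (((∑ k, matTensor (a k) (y k)) ^ j) i i)) :
    ∀ (k : ℕ), 1 ≤ k → ∀ idx : Fin k → Fin n,
      τ (List.ofFn (fun j => x (idx j))).prod = σ (List.ofFn (fun j => y (idx j))).prod :=
  same_distribution_of_matrix_moments_general τ σ hτtr hσtr n x y hmom
end

section
/- Let A be a unital associative ℂ-algebra and τ : A → ℂ a linear functional with τ(xy) = τ(yx) for all x,y ∈ A. Let n ≥ 1 and x_1,…,x_n ∈ A. For z = (z_1,…,z_n) ∈ ℂⁿ define the matrices a_k(z) ∈ M_n(ℂ) by a_k(z) = z_k e_{k,k+1} + conj(z_k) e_{k+1,k} for 1 ≤ k < n and a_n(z) = z_n e_{n,1} + conj(z_n) e_{1,n}. Then the function z ↦ (tr_n ⊗ τ)((a_1(z) ⊗ x_1 + ⋯ + a_n(z) ⊗ x_n)^n) is a polynomial function in the 2n variables z_1,…,z_n, conj(z_1),…,conj(z_n),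 and the coefficient of the monomial z_1 z_2 ⋯ z_n in this polynomial equals τ(x_1 x_2 ⋯ x_n). -/
/-!
Replace `z_k` and `conj z_k` by independent variables `X (inl k)`, `X (inr k)`: the matrix
`∑ a_k(z) ⊗ x_k` becomes a matrix `M` over `ℂ[X] ⊗ A`, and `P = n⁻¹ (id ⊗ τ)(tr Mⁿ)` specializes
to the given function. The monomial `X (inl 1) ⋯ X (inl n)` contains no `X (inr k)`, so its
coefficient survives setting those variables to `0`, which turns `M` into the weighted cyclic shift
with weights `X (inl k) ⊗ x_k`. Each diagonal entry of its `n`-th power is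
`(∏ X (inl k)) ⊗ (a cyclic rotation of x₁ ⋯ xₙ)`, and the trace property of `τ` undoes the rotation.
-/

open scoped Matrix ComplexConjugate

open scoped TensorProduct

open MvPolynomial Fin.NatCast

theorem trace_prod_rotate {M B : Type*} [Monoid M] (τ : M → B)
    (hτ : ∀ x y, τ (x * y) = τ (y * x)) (l : List M) (k : ℕ) :
    τ (l.rotate k).prod = τ l.prod := by
  rw [List.rotate_eq_drop_append_take_mod, List.prod_append, hτ, ← List.prod_append,
    List.take_append_drop]

theorem List.ofFn_add_left_eq_rotate {α : Type*} {n : ℕ} [NeZero n] (f : Fin n → α)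
    (i : Fin n) : List.ofFn (fun t => f (i + t)) = (List.ofFn f).rotate i := by
  refine List.ext_getElem (by simp) fun k _ _ => ?_
  simp only [List.getElem_ofFn, List.getElem_rotate, List.length_ofFn]
  congr 1
  ext
  simp [Fin.val_add, Nat.add_comm]

theorem List.prod_ofFn_tmul {K B C : Type*} [CommSemiring K] [Semiring B] [Algebra K B]
    [Semiring C] [Algebra K C] {m : ℕ} (p : Fin m → B) (y : Fin m → C) :
    (List.ofFn fun t => p t ⊗ₜ[K] y t).prod = (List.ofFn p).prod ⊗ₜ (List.ofFn y).prod := by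
  induction m with
  | zero => simp [Algebra.TensorProduct.one_def]
  | succ m ih => simp [List.ofFn_succ, ih, Algebra.TensorProduct.tmul_mul_tmul]

section WeightedCycleMatrix

variable {S : Type*} {n : ℕ} [NeZero n]

def weightedCycleMatrix [AddZeroClass S] (u w : Fin n → S) : Matrix (Fin n) (Fin n) S :=
  Matrix.of fun i j => (if j = i + 1 then u i else 0) + (if i = j + 1 then w j else 0)

theorem weightedCycleMatrix_map [AddZeroClass S] {T F : Type*} [AddZeroClass T] [FunLike F S T]
    [AddMonoidHomClass F S T] (u w : Fin n → S) (f : F) :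
    (weightedCycleMatrix u w).map f = weightedCycleMatrix (f ∘ u) (f ∘ w) := by
  ext i j
  simp [weightedCycleMatrix, apply_ite f]

theorem weightedCycleMatrix_zero_pow_apply [Semiring S] (u : Fin n → S) (m : ℕ) (i j : Fin n) :
    (weightedCycleMatrix u 0 ^ m) i j =
      if j = i + m then (List.ofFn fun t : Fin m => u (i + t)).prod else 0 := by
  induction m generalizing j with
  | zero => simp [Matrix.one_apply, eq_comm]
  | succ m ih =>
    rw [pow_succ, Matrix.mul_apply]
    simp_rw [ih, ite_mul, zero_mul, Finset.sum_ite_eq', Finset.mem_univ, if_true]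
    rw [List.ofFn_succ', List.prod_concat]
    simp [weightedCycleMatrix, ← add_assoc]

theorem sum_matTensor_single {A : Type*} [Ring A] [Algebra ℂ A] (z w : Fin n → ℂ)
    (x : Fin n → A) :
    ∑ k, matTensor (z k • Matrix.single k (k + 1) (1 : ℂ) + w k • Matrix.single (k + 1) k 1) (x k) =
      weightedCycleMatrix (fun k => z k • x k) (fun k => w k • x k) := by
  ext i j
  simp only [matTensor, weightedCycleMatrix, Matrix.sum_apply, Matrix.of_apply, Matrix.add_apply,
    Matrix.smul_apply, Matrix.single_apply, add_smul, Finset.sum_add_distrib]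
  congr 1
  · simp [ite_and, eq_comm]
  · simp [ite_and, and_comm, @eq_comm _ (j + 1)]

end WeightedCycleMatrix

section TensorFunctional

variable {K A R R' σ : Type*} [CommSemiring K] [Semiring A] [Algebra K A]
  [CommSemiring R] [Algebra K R] [CommSemiring R'] [Algebra K R']

noncomputable def tensorFunctional (τ : A →ₗ[K] K) : R ⊗[K] A →ₗ[K] R :=
  TensorProduct.rid K R ∘ₗ τ.lTensor R

@[simp] theorem tensorFunctional_tmul (τ : A →ₗ[K] K) (p : R) (y : A) :
    tensorFunctional τ (p ⊗ₜ y) = τ y • p := by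
  simp [tensorFunctional]

theorem tensorFunctional_map (τ : A →ₗ[K] K) (φ : R →ₐ[K] R') (w : R ⊗[K] A) :
    tensorFunctional τ (Algebra.TensorProduct.map φ (AlgHom.id K A) w) =
      φ (tensorFunctional τ w) := by
  induction w with
  | zero => simp
  | tmul p y => simp
  | add w₁ w₂ h₁ h₂ => simp only [map_add, h₁, h₂]

noncomputable def evalTensor (v : σ → K) : MvPolynomial σ K ⊗[K] A →ₐ[K] A :=
  (Algebra.TensorProduct.lid K A).toAlgHom.comp
    (Algebra.TensorProduct.map (aeval v) (AlgHom.id K A))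

@[simp] theorem evalTensor_tmul (v : σ → K) (p : MvPolynomial σ K) (y : A) :
    evalTensor v (p ⊗ₜ y) = eval v p • y := by
  simp [evalTensor]

theorem eval_tensorFunctional (τ : A →ₗ[K] K) (v : σ → K) (w : MvPolynomial σ K ⊗[K] A) :
    eval v (tensorFunctional τ w) = τ (evalTensor v w) := by
  induction w with
  | zero => simp
  | tmul p y => simp [mul_comm]
  | add w₁ w₂ h₁ h₂ => simp only [map_add, h₁, h₂]

theorem tensorFunctional_weightedCycleMatrix_pow_apply_self (τ : A →ₗ[K] K)
    (hτ : ∀ x y : A, τ (x * y) = τ (y * x)) {n : ℕ} [NeZero n] (p : Fin n → R) (x : Fin n → A)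
    (i : Fin n) :
    tensorFunctional τ ((weightedCycleMatrix (fun k => p k ⊗ₜ[K] x k) 0 ^ n) i i) =
      τ (List.ofFn x).prod • ∏ k, p k := by
  have hcast : ∀ t : Fin n, i + ((t : ℕ) : Fin n) = i + t := fun t => by
    rw [Fin.cast_val_eq_self]
  rw [weightedCycleMatrix_zero_pow_apply, if_pos (by simp), List.prod_ofFn_tmul,
    tensorFunctional_tmul]
  simp only [hcast]
  rw [List.ofFn_add_left_eq_rotate x, trace_prod_rotate τ hτ, List.prod_ofFn,
    Fintype.prod_equiv (Equiv.addLeft i) (fun t => p (i + t)) p fun _ => rfl]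

end TensorFunctional

section CyclicLinearization

variable (K : Type*) {A : Type*} [CommSemiring K] [Semiring A] [Algebra K A] {n : ℕ} [NeZero n]

/-- `∑ a_k(z) ⊗ x_k` with `z_k` and `conj z_k` replaced by the variables `X (inl k)` and
`X (inr k)`. -/
noncomputable def cyclicLinearization (x : Fin n → A) :
    Matrix (Fin n) (Fin n) (MvPolynomial (Fin n ⊕ Fin n) K ⊗[K] A) :=
  weightedCycleMatrix (fun k => X (Sum.inl k) ⊗ₜ x k) (fun k => X (Sum.inr k) ⊗ₜ x k)

variable {K}

theorem evalTensor_mapMatrix_cyclicLinearization (v : Fin n ⊕ Fin n → K) (x : Fin n → A) :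
    (evalTensor v).mapMatrix (cyclicLinearization K x) =
      weightedCycleMatrix (fun k => v (Sum.inl k) • x k) (fun k => v (Sum.inr k) • x k) := by
  rw [AlgHom.mapMatrix_apply, cyclicLinearization, weightedCycleMatrix_map]
  congr 1 <;> funext k <;> simp

theorem killCompl_tensorFunctional_trace_pow (τ : A →ₗ[K] K)
    (hτ : ∀ x y : A, τ (x * y) = τ (y * x)) (x : Fin n → A) :
    killCompl Sum.inl_injective (tensorFunctional τ (cyclicLinearization K x ^ n).trace) =
      n • τ (List.ofFn x).prod • ∏ k, X k := by
  have hM : (Algebra.TensorProduct.map (killCompl Sum.inl_injective) (AlgHom.id K A)).mapMatrix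
      (cyclicLinearization K x) = weightedCycleMatrix (fun k => X k ⊗ₜ x k) 0 := by
    rw [AlgHom.mapMatrix_apply, cyclicLinearization, weightedCycleMatrix_map]
    congr 1 <;> funext k <;> simp [killCompl]
  rw [← tensorFunctional_map, AddMonoidHom.map_trace, ← AlgHom.mapMatrix_apply, map_pow, hM,
    Matrix.trace, map_sum]
  simp only [Matrix.diag_apply, tensorFunctional_weightedCycleMatrix_pow_apply_self τ hτ,
    Finset.sum_const, Finset.card_univ, Fintype.card_fin]

end CyclicLinearization

/-- Let `A` be a unital associative `ℂ`-algebra with a tracial linear functional `τ`.  With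
`a_k(z) = z_k e_{k,k+1} + conj(z_k) e_{k+1,k}` (indices cyclic mod `n`), the function
`z ↦ (tr_n ⊗ τ)((Σ_k a_k(z) ⊗ x_k)^n)` is a polynomial in `z₁, …, zₙ, conj z₁, …, conj zₙ`,
and the coefficient of `z₁ z₂ ⋯ zₙ` equals `τ(x₁ x₂ ⋯ xₙ)`. -/
theorem coeff_of_cyclic_linearization
    {A : Type*} [Ring A] [Algebra ℂ A]
    (τ : A →ₗ[ℂ] ℂ) (hτtr : ∀ x y : A, τ (x * y) = τ (y * x))
    (n : ℕ) (hn : 1 ≤ n) (x : Fin n → A)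
    (a : (Fin n → ℂ) → Fin n → Matrix (Fin n) (Fin n) ℂ)
    (ha : ∀ (z : Fin n → ℂ) (k : Fin n), a z k =
      z k • Matrix.single k (finRotate n k) (1 : ℂ) +
        conj (z k) • Matrix.single (finRotate n k) k (1 : ℂ)) :
    ∃ P : MvPolynomial (Fin n ⊕ Fin n) ℂ,
      (∀ z : Fin n → ℂ,
        (n : ℂ)⁻¹ * ∑ i, τ (((∑ k, matTensor (a z k) (x k)) ^ n) i i) =
          MvPolynomial.eval (Sum.elim z (fun j => conj (z j))) P) ∧
      MvPolynomial.coeff (∑ j : Fin n, Finsupp.single (Sum.inl j) 1) P =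
        τ (List.ofFn x).prod := by
  have : NeZero n := ⟨by omega⟩
  refine ⟨(n : ℂ)⁻¹ • tensorFunctional τ (cyclicLinearization ℂ x ^ n).trace, fun z => ?_, ?_⟩
  · have ha' : ∑ k, matTensor (a z k) (x k) =
        weightedCycleMatrix (fun k => z k • x k) (fun k => conj (z k) • x k) := by
      simp_rw [ha, finRotate_apply]
      exact sum_matTensor_single _ _ x
    rw [smul_eval, eval_tensorFunctional, AddMonoidHom.map_trace, ← AlgHom.mapMatrix_apply,
      map_pow, evalTensor_mapMatrix_cyclicLinearization, Matrix.trace, map_sum]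
    simp [ha']
  · have hm : ∑ j : Fin n, Finsupp.single (Sum.inl j : Fin n ⊕ Fin n) 1 =
        Finsupp.mapDomain Sum.inl (∑ j : Fin n, Finsupp.single j 1) := by
      simp [Finsupp.mapDomain_finsetSum, Finsupp.mapDomain_single]
    rw [hm, ← coeff_killCompl Sum.inl_injective, map_smul,
      killCompl_tensorFunctional_trace_pow τ hτtr, ← Nat.cast_smul_eq_nsmul ℂ, smul_smul,
      inv_mul_cancel₀ (NeZero.ne _), one_smul, coeff_smul,
      show ∏ k, (X k : MvPolynomial (Fin n) ℂ) = monomial (∑ k, Finsupp.single k 1) 1 from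
        (monomial_sum_one _ _).symm, coeff_monomial, if_pos rfl, smul_eq_mul, mul_one]
end

section
/- Let A be a unital complex *-algebra and τ : A → ℂ a linear functional with τ(xy) = τ(yx) for all x,y ∈ A. Fix n ≥ 1, a sign pattern ε = (ε_1,…,ε_n) ∈ {1,*}^n, elements x_1,…,x_n ∈ A, and matrices a_1,…,a_n ∈ M_m(ℂ) satisfying the cyclic trace property. For z ∈ ℂⁿ set S_z = 1 + Σ_{j=1}^n z_j (a_j^{ε_j} ⊗ x_j) ∈ M_m(A). Then for every integer k ≥ 0, the function z ↦ (tr_m ⊗ τ)((S_z^* S_z − 1)^k) is a polynomial function in the 2n variables z_1,…,z_n, conj(z_1),…,conj(z_n), and the coefficient of the monomial z^ε := ∏_{j=1}^n z_j^{ε_j} in this polynomial equals τ(x_1^{ε_1} x_2^{ε_2} ⋯ x_n^{ε_n}) · k · binom(α(ε), n−k), where binom denotes the ordinary binomial coefficient (equal to 0 when n−k < 0 or n−k > α(ε)). -/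
/-!
Write `S_z = 1 + T` with `T = Σ_j z_j (a_j^{ε_j} ⊗ x_j)`, so that `S_z^* S_z - 1 = T^* + T + T^* T`.
Its `k`-th power is a sum over words of `k` letters, each letter a term of `T`, of `T^*` or of
`T^* T`; a word contributes a single monomial, with coefficient `(tr_m ⊗ τ)` of the product of its
letters. The monomial is `z^ε` exactly when every letter fits `ε` and the indices of the word, read
left to right, are a permutation of `1, …, n`. By the cyclic trace property only the cyclic
rotations `c, c+1, …, c-1` survive, each contributing `τ(x_1^{ε_1} ⋯ x_n^{ε_n})` by traciality.
Cutting a rotation into `k` letters amounts to choosing which `n - k` of its adjacent pairs `(*, 1)`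
are read as one letter of `T^* T`: there are `α(ε) - 1` such pairs if the rotation splits a cyclic
pair `(*, 1)` and `α(ε)` otherwise, and
`α · binom(α - 1, n - k) + (n - α) · binom(α, n - k) = k · binom(α, n - k)`.
-/

open scoped Matrix ComplexConjugate

namespace CyclicTrace

open Finset

variable {n : ℕ}

def Joinable (ε : Fin n → Bool) (i j : Fin n) : Prop := ε i = true ∧ ε j = false

instance (ε : Fin n → Bool) : DecidableRel (Joinable ε) :=
  fun _ _ => inferInstanceAs (Decidable (_ ∧ _))

/-- The variable of `z_j^{ε_j}`, where `inl j` stands for `z_j` and `inr j` for `conj z_j`. -/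
def signedVar (ε : Fin n → Bool) (j : Fin n) : Fin n ⊕ Fin n :=
  if ε j then .inr j else .inl j

lemma signedVar_eq_inl_iff {ε : Fin n → Bool} {i j : Fin n} :
    signedVar ε i = .inl j ↔ i = j ∧ ε j = false := by
  unfold signedVar; split_ifs <;> aesop

lemma signedVar_eq_inr_iff {ε : Fin n → Bool} {i j : Fin n} :
    signedVar ε i = .inr j ↔ i = j ∧ ε j = true := by
  unfold signedVar; split_ifs <;> aesop

lemma signedVar_injective (ε : Fin n → Bool) : Function.Injective (signedVar ε) := by
  intro i j h
  unfold signedVar at h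
  split_ifs at h <;> simpa using h

def starIf {R : Type*} [Star R] (ε : Fin n → Bool) (y : Fin n → R) (j : Fin n) : R :=
  if ε j then star (y j) else y j

@[simp] lemma starIf_starIf {R : Type*} [InvolutiveStar R] (ε : Fin n → Bool) (y : Fin n → R) :
    starIf ε (starIf ε y) = y := by
  ext j
  unfold starIf
  split_ifs <;> simp

/-- The letters of the expansion of `T^* + T + T^* T` for `T = Σ_j z_j T_j`: `inl j` is `z_j T_j`,
`inr (inl i)` is `conj z_i T_i^*` and `inr (inr (i, j))` is `conj z_i z_j T_i^* T_j`. -/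
abbrev Letter (n : ℕ) := Fin n ⊕ Fin n ⊕ (Fin n × Fin n)

namespace Letter

def eval {R : Type*} [Mul R] [Star R] (y : Fin n → R) : Letter n → R
  | .inl j => y j
  | .inr (.inl i) => star (y i)
  | .inr (.inr (i, j)) => star (y i) * y j

def indices : Letter n → List (Fin n)
  | .inl j => [j]
  | .inr (.inl i) => [i]
  | .inr (.inr (i, j)) => [i, j]

def vars : Letter n → List (Fin n ⊕ Fin n)
  | .inl j => [.inl j]
  | .inr (.inl i) => [.inr i]
  | .inr (.inr (i, j)) => [.inr i, .inl j]

/-- The letter's monomial divides `z^ε`. -/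
def Fits (ε : Fin n → Bool) : Letter n → Prop
  | .inl j => ε j = false
  | .inr (.inl i) => ε i = true
  | .inr (.inr (i, j)) => Joinable ε i j

def ofIndex (ε : Fin n → Bool) (j : Fin n) : Letter n :=
  if ε j then .inr (.inl j) else .inl j

variable {ε : Fin n → Bool} {u : Letter n}

@[simp] lemma indices_ofIndex (ε : Fin n → Bool) (j : Fin n) : (ofIndex ε j).indices = [j] := by
  unfold ofIndex; split <;> rfl

lemma fits_ofIndex (ε : Fin n → Bool) (j : Fin n) : (ofIndex ε j).Fits ε := by
  unfold ofIndex; split <;> simp_all [Fits]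

lemma eq_ofIndex {j : Fin n} (hu : u.Fits ε) (h : u.indices = [j]) : u = ofIndex ε j := by
  rcases u with i | i | ⟨i, i'⟩ <;> simp_all [indices, Fits, ofIndex]

lemma eval_of_fits {R : Type*} [Monoid R] [Star R] (y : Fin n → R) (hu : u.Fits ε) :
    u.eval y = (u.indices.map (starIf ε y)).prod := by
  rcases u with j | i | ⟨i, j⟩ <;> simp_all [Fits, Joinable, eval, indices, starIf]

lemma vars_eq_map_signedVar (hu : u.Fits ε) : u.vars = u.indices.map (signedVar ε) := by
  rcases u with j | i | ⟨i, j⟩ <;> simp_all [Fits, Joinable, vars, indices, signedVar]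

lemma fits_of_vars_subset (h : ∀ v ∈ u.vars, v ∈ Set.range (signedVar ε)) : u.Fits ε := by
  rcases u with j | i | ⟨i, j⟩ <;>
    simp_all [vars, Fits, Joinable, signedVar_eq_inl_iff, signedVar_eq_inr_iff]

end Letter

open Letter

lemma list_prod_map_eval_of_fits {R : Type*} [Monoid R] [Star R] {ε : Fin n → Bool}
    (y : Fin n → R) {l : List (Letter n)} (hl : ∀ u ∈ l, u.Fits ε) :
    (l.map (Letter.eval y)).prod = ((l.flatMap indices).map (starIf ε y)).prod := by
  induction l with
  | nil => rfl
  | cons u l ih =>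
    simp only [List.map_cons, List.prod_cons, List.flatMap_cons, List.map_append, List.prod_append,
      eval_of_fits y (hl u (by simp)), ih fun v hv => hl v (by simp [hv])]

def joinCount (ε : Fin n → Bool) : List (Fin n) → ℕ
  | i :: j :: w => (if Joinable ε i j then 1 else 0) + joinCount ε (j :: w)
  | _ => 0

lemma joinCount_cons_le (ε : Fin n → Bool) (j : Fin n) (w : List (Fin n)) :
    joinCount ε (j :: w) ≤ w.length := by
  induction w generalizing j with
  | nil => simp [joinCount]
  | cons j' w ih => grind [joinCount]

lemma joinCount_cons_of_joinable {ε : Fin n → Bool} {i j : Fin n} (h : Joinable ε i j)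
    (w : List (Fin n)) : joinCount ε (j :: w) = joinCount ε w := by
  cases w with
  | nil => rfl
  | cons j' w => simp [joinCount, Joinable, h.2]

section Blockings

variable (ε : Fin n → Bool)

/-- The ways of cutting the word `w` into `k` letters that fit `ε`. -/
def blockings : List (Fin n) → ℕ → Finset (List (Letter n))
  | [], 0 => {[]}
  | [], _ + 1 => ∅
  | _ :: _, 0 => ∅
  | [j], k + 1 => (blockings [] k).map ⟨List.cons (ofIndex ε j), List.cons_injective⟩
  | i :: j :: w, k + 1 =>
      (blockings (j :: w) k).map ⟨List.cons (ofIndex ε i), List.cons_injective⟩ ∪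
      if Joinable ε i j then
        (blockings w k).map ⟨List.cons (.inr (.inr (i, j))), List.cons_injective⟩
      else ∅

lemma ofIndex_cons_mem_blockings (j : Fin n) {l : List (Letter n)} {w : List (Fin n)} {k : ℕ}
    (hl : l ∈ blockings ε w k) : ofIndex ε j :: l ∈ blockings ε (j :: w) (k + 1) := by
  cases w <;> simp [blockings, hl]

lemma cons_mem_blockings {u : Letter n} (hu : u.Fits ε) {l : List (Letter n)} {w : List (Fin n)}
    {k : ℕ} (hl : l ∈ blockings ε w k) : u :: l ∈ blockings ε (u.indices ++ w) (k + 1) := by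
  rcases u with j | j | ⟨i, j⟩
  iterate 2 · simpa [eq_ofIndex hu rfl] using ofIndex_cons_mem_blockings ε j hl
  · have hij : Joinable ε i j := hu
    simp [blockings, indices, hij, hl]

theorem mem_blockings {w : List (Fin n)} {k : ℕ} {l : List (Letter n)} :
    l ∈ blockings ε w k ↔ l.flatMap indices = w ∧ (∀ u ∈ l, u.Fits ε) ∧ l.length = k := by
  constructor
  · induction w, k using blockings.induct generalizing l with
    | case1 => simp only [blockings, mem_singleton]; rintro rfl; simp
    | case2 | case3 => simp [blockings]
    | case4 j k ih =>
      simp only [blockings, mem_map, Function.Embedding.coeFn_mk]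
      rintro ⟨l, hl, rfl⟩
      obtain ⟨hw, hfits, hlen⟩ := ih hl
      simp_all [fits_ofIndex]
    | case5 i j w k ih₁ ih₂ =>
      simp only [blockings, mem_union, mem_map, Function.Embedding.coeFn_mk]
      rintro (⟨l, hl, rfl⟩ | hl)
      · obtain ⟨hw, hfits, hlen⟩ := ih₁ hl
        simp_all [fits_ofIndex]
      · split_ifs at hl with hij
        · simp only [mem_map, Function.Embedding.coeFn_mk] at hl
          obtain ⟨l, hl, rfl⟩ := hl
          obtain ⟨hw, hfits, hlen⟩ := ih₂ hl
          simp_all [indices, Fits]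
        · simp at hl
  · rintro ⟨rfl, hfits, rfl⟩
    induction l with
    | nil => simp [blockings]
    | cons u l ih =>
      exact cons_mem_blockings ε (hfits u (by simp)) (ih fun v hv => hfits v (by simp [hv]))

lemma length_le_length_flatMap_indices (l : List (Letter n)) :
    l.length ≤ (l.flatMap indices).length := by
  induction l with
  | nil => simp
  | cons u l ih =>
    have : 1 ≤ u.indices.length := by rcases u with _ | _ | _ <;> simp [indices]
    rw [List.flatMap_cons, List.length_append, List.length_cons]
    omega

lemma blockings_eq_empty {w : List (Fin n)} {k : ℕ} (h : w.length < k) : blockings ε w k = ∅ := by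
  refine eq_empty_of_forall_notMem fun l hl => ?_
  obtain ⟨rfl, -, rfl⟩ := (mem_blockings ε).1 hl
  exact (length_le_length_flatMap_indices l).not_gt h

theorem card_blockings {w : List (Fin n)} {k q : ℕ} (hq : k + q = w.length) :
    #(blockings ε w k) = (joinCount ε w).choose q := by
  induction w, k using blockings.induct generalizing q with
  | case1 =>
    obtain rfl : q = 0 := by simpa using hq
    simp [blockings, joinCount]
  | case2 => simp at hq
  | case3 j w =>
    have := joinCount_cons_le ε j w
    rw [Nat.choose_eq_zero_of_lt (by simp at hq; omega)]
    simp [blockings]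
  | case4 j k ih =>
    obtain ⟨rfl, rfl⟩ : k = 0 ∧ q = 0 := by simp at hq; omega
    simp [blockings, joinCount]
  | case5 i j w k ih₁ ih₂ =>
    -- The second index of a joinable pair has `ε = 1`, so joinable pairs never overlap: a
    -- blocking is a choice of `q` of the `joinCount ε w` joinable adjacent pairs.
    have hq₁ : k + q = (j :: w).length := by simp at hq ⊢; omega
    have hdisj :
        Disjoint ((blockings ε (j :: w) k).map ⟨List.cons (ofIndex ε i), List.cons_injective⟩)
          ((blockings ε w k).map ⟨List.cons (.inr (.inr (i, j))), List.cons_injective⟩) := by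
      simp only [disjoint_left, mem_map, Function.Embedding.coeFn_mk]
      rintro _ ⟨l, -, rfl⟩ ⟨l', -, h⟩
      simp only [List.cons.injEq, ofIndex] at h
      split at h <;> simp at h
    simp only [blockings]
    split_ifs with hij
    · rw [card_union_of_disjoint hdisj, card_map, card_map, ih₁ hq₁, joinCount,
        if_pos hij, joinCount_cons_of_joinable hij]
      rcases q with - | q
      · rw [blockings_eq_empty ε (by simp at hq; omega)]
        simp
      · rw [ih₂ (q := q) (by simp at hq; omega), add_comm 1, Nat.choose_succ_succ', add_comm]
    · simp [card_map, ih₁ hq₁, joinCount, hij]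

end Blockings

section Rotations

variable (ε : Fin n → Bool)

def rotWord (c : Fin n) : List (Fin n) := List.ofFn (· + c)

lemma rotWord_injective : Function.Injective (rotWord (n := n)) := by
  intro c c' h
  simpa using congrFun (List.ofFn_injective h) ⟨0, c.pos⟩

lemma coe_rotWord (c : Fin n) : (rotWord c : Multiset (Fin n)) = univ.val := by
  obtain ⟨N, rfl⟩ : ∃ N, n = N + 1 := Nat.exists_eq_add_one.2 c.pos
  exact (Fin.univ_val_map _).symm.trans (Multiset.map_univ_val_equiv (Equiv.addRight c))

lemma joinCount_ofFn {N : ℕ} (g : Fin (N + 1) → Fin n) :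
    joinCount ε (List.ofFn g) =
      ∑ p : Fin N, if Joinable ε (g p.castSucc) (g p.succ) then 1 else 0 := by
  induction N with
  | zero => simp [joinCount]
  | succ N ih =>
    have h := ih (g ∘ Fin.succ)
    simp only [List.ofFn_succ, Function.comp_apply] at h
    rw [List.ofFn_succ, List.ofFn_succ, joinCount, h, Fin.sum_univ_succ, Fin.castSucc_zero]
    simp only [Fin.succ_castSucc]

lemma joinCount_rotWord_add (c : Fin n) :
    joinCount ε (rotWord (finRotate n c)) + (if Joinable ε c (finRotate n c) then 1 else 0) =
      #{j | Joinable ε j (finRotate n j)} := by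
  obtain ⟨N, rfl⟩ : ∃ N, n = N + 1 := Nat.exists_eq_add_one.2 c.pos
  have hlast : Fin.last N + (c + 1) = c := by rw [add_left_comm, Fin.last_add_one, add_zero]
  rw [card_filter, ← Equiv.sum_comp (Equiv.addRight (c + 1)), Fin.sum_univ_castSucc, rotWord,
    joinCount_ofFn]
  simp only [Equiv.coe_addRight, finRotate_apply, hlast, add_right_comm _ _ (1 : Fin (N + 1)),
    Fin.coeSucc_eq_succ]

lemma mul_choose_pred_add_mul_choose {a k q : ℕ} (ha : a ≤ k + q) :
    a * (a - 1).choose q + (k + q - a) * a.choose q = k * a.choose q := by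
  rcases a with - | b
  · rcases q with - | q <;> simp
  rw [Nat.add_sub_cancel, mul_comm, Nat.choose_mul_succ_eq, mul_comm (k + q - _), ← mul_add,
    mul_comm k]
  by_cases h : q ≤ b + 1
  · congr 1
    omega
  · simp [Nat.choose_eq_zero_of_lt (not_le.1 h)]

theorem sum_choose_joinCount_rotWord {k q : ℕ} (hq : k + q = n) :
    ∑ c, (joinCount ε (rotWord c)).choose q =
      k * (#{j | Joinable ε j (finRotate n j)}).choose q := by
  subst hq
  set α := #{j | Joinable ε j (finRotate (k + q) j)}
  have hterm (c : Fin (k + q)) : (joinCount ε (rotWord (finRotate _ c))).choose q =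
      if Joinable ε c (finRotate _ c) then (α - 1).choose q else α.choose q := by
    have := joinCount_rotWord_add ε c
    split_ifs at this ⊢ <;> exact congrArg (Nat.choose · q) (by omega)
  have hα : α ≤ k + q := (card_le_univ _).trans_eq (Fintype.card_fin _)
  have hcompl : #{c | ¬Joinable ε c (finRotate _ c)} = k + q - α := by
    have := card_filter_add_card_filter_not (s := univ) fun c => Joinable ε c (finRotate _ c)
    rw [card_univ, Fintype.card_fin] at this
    omega
  rw [← Equiv.sum_comp (finRotate _), sum_congr rfl fun c _ => hterm c, sum_ite, sum_const,
    sum_const, hcompl, smul_eq_mul, smul_eq_mul]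
  exact mul_choose_pred_add_mul_choose hα

theorem sum_card_blockings_rotWord (k : ℕ) :
    ∑ c, #(blockings ε (rotWord c) k) =
      k * if k ≤ n then (#{j | Joinable ε j (finRotate n j)}).choose (n - k) else 0 := by
  have hlen (c : Fin n) : (rotWord c).length = n := List.length_ofFn
  split_ifs with hk
  · rw [sum_congr rfl fun c _ => card_blockings ε (q := n - k) (by rw [hlen]; omega),
      sum_choose_joinCount_rotWord ε (k := k) (by omega)]
  · rw [sum_eq_zero fun c _ => by rw [blockings_eq_empty ε (by rw [hlen]; omega), card_empty],
      mul_zero]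

end Rotations

lemma exists_perm_ofFn_eq {w : List (Fin n)} (hw : (w : Multiset (Fin n)) = univ.val) :
    ∃ σ : Equiv.Perm (Fin n), List.ofFn σ = w := by
  have hnd : w.Nodup := by rw [← Multiset.coe_nodup, hw]; exact univ.nodup
  have hlen : w.length = n := by simpa using congrArg Multiset.card hw
  have hmem (j : Fin n) : j ∈ w := by rw [← Multiset.mem_coe, hw]; exact mem_univ j
  refine ⟨(finCongr hlen.symm).trans (hnd.getEquivOfForallMemList w hmem), ?_⟩
  apply List.ext_getElem (by simp [hlen])
  intro i _ _
  simp [List.Nodup.getEquivOfForallMemList]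

def CyclicTraceProperty {m : ℕ} (a : Fin n → Matrix (Fin m) (Fin m) ℂ) : Prop :=
  ∀ σ : Equiv.Perm (Fin n), (m : ℂ)⁻¹ * (List.ofFn fun j => a (σ j)).prod.trace =
    if ∃ c : Fin n, ∀ j : Fin n, σ j = j + c then 1 else 0

lemma inv_mul_trace_prod_of_cyclic {m : ℕ} {a : Fin n → Matrix (Fin m) (Fin m) ℂ}
    (hcyc : CyclicTraceProperty a) {w : List (Fin n)} (hw : (w : Multiset (Fin n)) = univ.val) :
    (m : ℂ)⁻¹ * (w.map a).prod.trace = if ∃ c, w = rotWord c then 1 else 0 := by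
  obtain ⟨σ, rfl⟩ := exists_perm_ofFn_eq hw
  rw [List.map_ofFn, Function.comp_def, hcyc σ]
  simp only [rotWord, List.ofFn_inj, funext_iff]

lemma apply_prod_rotate {M R : Type*} [Monoid M] {φ : M → R} (hφ : ∀ x y, φ (x * y) = φ (y * x))
    (l : List M) (k : ℕ) : φ (l.rotate k).prod = φ l.prod := by
  rw [List.rotate_eq_drop_append_take_mod, List.prod_append, hφ, ← List.prod_append,
    List.take_append_drop]

lemma apply_prod_map_rotWord {M R : Type*} [Monoid M] {φ : M → R}
    (hφ : ∀ x y, φ (x * y) = φ (y * x)) (y : Fin n → M) (c : Fin n) :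
    φ ((rotWord c).map y).prod = φ (List.ofFn y).prod := by
  have hrot : rotWord c = (List.finRange n).rotate c := by
    apply List.ext_getElem (by simp [rotWord])
    intro i _ _
    ext
    simp [rotWord, List.getElem_rotate, Fin.val_add]
  rw [hrot, List.map_rotate, apply_prod_rotate hφ, List.ofFn_eq_map]

noncomputable def deg (l : List (Letter n)) : (Fin n ⊕ Fin n) →₀ ℕ :=
  Multiset.toFinsupp (l.flatMap vars : Multiset (Fin n ⊕ Fin n))

open MvPolynomial in
lemma monomial_toFinsupp {σ R : Type*} [DecidableEq σ] [CommSemiring R] (s : Multiset σ) (c : R) :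
    monomial (Multiset.toFinsupp s) c = C c * (s.map X).prod := by
  induction s using Multiset.induction_on with
  | empty => simp
  | cons v s ih =>
    rw [← Multiset.singleton_add, Multiset.toFinsupp_add, Multiset.toFinsupp_singleton,
      monomial_single_add, pow_one, ih]
    simp only [Multiset.map_add, Multiset.map_singleton, Multiset.prod_add, Multiset.prod_singleton]
    ring

lemma eval_monomial_deg (z : Fin n → ℂ) (l : List (Letter n)) (c : ℂ) :
    MvPolynomial.eval (Sum.elim z fun j => conj (z j)) (MvPolynomial.monomial (deg l) c) =
      c * (l.map (Letter.eval z)).prod := by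
  rw [deg, monomial_toFinsupp, map_mul, MvPolynomial.eval_C, Multiset.map_coe, Multiset.prod_coe,
    map_list_prod, List.map_map, List.map_flatMap, List.flatMap_def, List.prod_flatten,
    List.map_map]
  congr 2
  ext u
  rcases u with _ | _ | _ <;> simp [vars, Letter.eval]

theorem deg_eq_iff (ε : Fin n → Bool) (l : List (Letter n)) :
    deg l = ∑ j, Finsupp.single (signedVar ε j) 1 ↔
      (∀ u ∈ l, u.Fits ε) ∧ (l.flatMap indices : Multiset (Fin n)) = univ.val := by
  have hsum : ∑ j, Finsupp.single (signedVar ε j) 1 =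
      Multiset.toFinsupp (univ.val.map (signedVar ε)) := by
    rw [← Multiset.sum_map_singleton (univ.val.map (signedVar ε)), map_multiset_sum,
      Multiset.map_map, Multiset.map_map]
    simp [Finset.sum]
  have hflat (hl : ∀ u ∈ l, u.Fits ε) :
      l.flatMap vars = (l.flatMap indices).map (signedVar ε) := by
    rw [List.map_flatMap]
    exact List.flatMap_congr fun u hu => vars_eq_map_signedVar (hl u hu)
  rw [deg, hsum, Multiset.toFinsupp.injective.eq_iff]
  constructor
  · intro h
    have hfits (u : Letter n) (hu : u ∈ l) : u.Fits ε := fits_of_vars_subset fun v hv => by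
      have : v ∈ univ.val.map (signedVar ε) :=
        h ▸ Multiset.mem_coe.2 (List.mem_flatMap.2 ⟨u, hu, hv⟩)
      simpa using this
    refine ⟨hfits, Multiset.map_injective (signedVar_injective ε) ?_⟩
    rw [Multiset.map_coe, ← hflat hfits, h]
  · rintro ⟨hfits, hw⟩
    rw [hflat hfits, ← Multiset.map_coe, hw]

lemma card_filter_ofFn_mem {α : Type*} [Fintype α] [DecidableEq α] {k : ℕ} (s : Finset (List α))
    (hs : ∀ l ∈ s, l.length = k) : #{f : Fin k → α | List.ofFn f ∈ s} = #s := by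
  refine card_bij (fun f _ => List.ofFn f) (fun f hf => (mem_filter.1 hf).2)
    (fun f _ g _ h => List.ofFn_injective h) fun l hl => ?_
  obtain rfl := hs l hl
  exact ⟨fun i => l[i], by simpa using hl, List.ofFn_getElem⟩

theorem sum_pow_eq_sum_prod_ofFn {R : Type*} [Semiring R] {ι : Type*} [Fintype ι] (g : ι → R)
    (k : ℕ) : (∑ u, g u) ^ k = ∑ f : Fin k → ι, ((List.ofFn f).map g).prod := by
  induction k with
  | zero => simp
  | succ k ih =>
    rw [pow_succ', ih, sum_mul_sum, ← Fintype.sum_prod_type',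
      ← (Fin.consEquiv fun _ => ι).sum_comp]
    simp [Fin.consEquiv, List.ofFn_succ]

section MatTensor

variable {m : ℕ} {A : Type*} [Ring A] [Algebra ℂ A]

lemma matTensor_mul (a b : Matrix (Fin m) (Fin m) ℂ) (x y : A) :
    matTensor a x * matTensor b y = matTensor (a * b) (x * y) := by
  ext i j
  simp only [matTensor, Matrix.mul_apply, Matrix.of_apply, smul_mul_smul_comm, sum_smul]

lemma matTensor_one : matTensor (1 : Matrix (Fin m) (Fin m) ℂ) (1 : A) = 1 := by
  ext i j
  by_cases h : i = j <;> simp [matTensor, Matrix.one_apply, h]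

lemma star_matTensor [StarRing A] [StarModule ℂ A] (a : Matrix (Fin m) (Fin m) ℂ) (x : A) :
    star (matTensor a x) = matTensor (star a) (star x) := by
  ext i j
  simp [matTensor, star_smul]

lemma trace_matTensor (a : Matrix (Fin m) (Fin m) ℂ) (x : A) :
    (matTensor a x).trace = a.trace • x := by
  simp [Matrix.trace, matTensor, sum_smul]

lemma list_prod_map_smul_matTensor {ι : Type*} (c : ι → ℂ) (b : ι → Matrix (Fin m) (Fin m) ℂ)
    (y : ι → A) (l : List ι) :
    (l.map fun u => c u • matTensor (b u) (y u)).prod =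
      (l.map c).prod • matTensor (l.map b).prod (l.map y).prod := by
  induction l with
  | nil => simp [matTensor_one]
  | cons u l ih => simp only [List.map_cons, List.prod_cons, ih, smul_mul_smul_comm, matTensor_mul]

theorem star_one_add_mul_one_add_sub_one [StarRing A] [StarModule ℂ A] (c : Fin n → ℂ)
    (b : Fin n → Matrix (Fin m) (Fin m) ℂ) (y : Fin n → A) :
    star (1 + ∑ j, c j • matTensor (b j) (y j)) * (1 + ∑ j, c j • matTensor (b j) (y j)) - 1 =
      ∑ u : Letter n, u.eval c • matTensor (u.eval b) (u.eval y) := by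
  have hstar : star (∑ j, c j • matTensor (b j) (y j)) =
      ∑ i, conj (c i) • matTensor (star (b i)) (star (y i)) := by
    simp [star_sum, star_smul, star_matTensor]
  simp only [Fintype.sum_sum_type, Fintype.sum_prod_type, Letter.eval, star_add, star_one, hstar,
    add_mul, mul_add, one_mul, mul_one, sum_mul_sum, smul_mul_smul_comm, matTensor_mul,
    Complex.star_def]
  abel

end MatTensor

section Expansion

variable {m : ℕ} {A : Type*} [Ring A] [Algebra ℂ A] [StarRing A] (τ : A →ₗ[ℂ] ℂ)

noncomputable def wordCoeff (b : Fin n → Matrix (Fin m) (Fin m) ℂ) (y : Fin n → A)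
    (l : List (Letter n)) : ℂ :=
  (m : ℂ)⁻¹ * (l.map (Letter.eval b)).prod.trace * τ (l.map (Letter.eval y)).prod

noncomputable def expansion (b : Fin n → Matrix (Fin m) (Fin m) ℂ) (y : Fin n → A) (k : ℕ) :
    MvPolynomial (Fin n ⊕ Fin n) ℂ :=
  ∑ f : Fin k → Letter n, MvPolynomial.monomial (deg (List.ofFn f)) (wordCoeff τ b y (List.ofFn f))

theorem eval_expansion [StarModule ℂ A] (b : Fin n → Matrix (Fin m) (Fin m) ℂ) (y : Fin n → A)
    (k : ℕ) (z : Fin n → ℂ) :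
    MvPolynomial.eval (Sum.elim z fun j => conj (z j)) (expansion τ b y k) =
      (m : ℂ)⁻¹ * ∑ i, τ (((star (1 + ∑ j, z j • matTensor (b j) (y j)) *
        (1 + ∑ j, z j • matTensor (b j) (y j)) - 1) ^ k) i i) := by
  have hdiag (M : Matrix (Fin m) (Fin m) A) : ∑ i, τ (M i i) = τ M.trace := (map_sum τ _ _).symm
  rw [hdiag, star_one_add_mul_one_add_sub_one, sum_pow_eq_sum_prod_ofFn, Matrix.trace_sum,
    map_sum, mul_sum, expansion, map_sum]
  refine sum_congr rfl fun f _ => ?_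
  rw [eval_monomial_deg, list_prod_map_smul_matTensor, Matrix.trace_smul, trace_matTensor,
    map_smul, map_smul, smul_eq_mul, smul_eq_mul, wordCoeff]
  ring

variable {τ} (ε : Fin n → Bool) (x : Fin n → A) {a : Fin n → Matrix (Fin m) (Fin m) ℂ}

theorem ite_deg_eq_sum_ite_mem_blockings (hτ : ∀ x y : A, τ (x * y) = τ (y * x))
    (hcyc : CyclicTraceProperty a) (l : List (Letter n)) :
    (if deg l = ∑ j, Finsupp.single (signedVar ε j) 1 then wordCoeff τ (starIf ε a) x l else 0) =
      ∑ c, if l ∈ blockings ε (rotWord c) l.length then τ (List.ofFn (starIf ε x)).prod else 0 := by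
  by_cases hdeg : deg l = ∑ j, Finsupp.single (signedVar ε j) 1
  · obtain ⟨hfits, hw⟩ := (deg_eq_iff ε l).1 hdeg
    have hmem (c : Fin n) :
        l ∈ blockings ε (rotWord c) l.length ↔ l.flatMap indices = rotWord c := by
      rw [mem_blockings]
      exact ⟨fun h => h.1, fun h => ⟨h, hfits, rfl⟩⟩
    rw [if_pos hdeg, wordCoeff, list_prod_map_eval_of_fits _ hfits,
      list_prod_map_eval_of_fits _ hfits, starIf_starIf, inv_mul_trace_prod_of_cyclic hcyc hw]
    simp only [hmem]
    split_ifs with hc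
    · obtain ⟨c, hc⟩ := hc
      simp [hc, apply_prod_map_rotWord hτ, rotWord_injective.eq_iff]
    · simp_all
  · rw [if_neg hdeg]
    refine (sum_eq_zero fun c _ => if_neg fun h => hdeg ?_).symm
    obtain ⟨hw, hfits, -⟩ := (mem_blockings ε).1 h
    exact (deg_eq_iff ε l).2 ⟨hfits, hw ▸ coe_rotWord c⟩

theorem coeff_expansion (hτ : ∀ x y : A, τ (x * y) = τ (y * x)) (hcyc : CyclicTraceProperty a)
    (k : ℕ) :
    (expansion τ (starIf ε a) x k).coeff (∑ j, Finsupp.single (signedVar ε j) 1) =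
      τ (List.ofFn (starIf ε x)).prod * ∑ c, #(blockings ε (rotWord c) k) := by
  rw [expansion, MvPolynomial.coeff_sum]
  simp only [MvPolynomial.coeff_monomial]
  rw [sum_congr rfl fun f _ => ite_deg_eq_sum_ite_mem_blockings ε x hτ hcyc (List.ofFn f),
    sum_comm, Nat.cast_sum, mul_sum]
  refine sum_congr rfl fun c _ => ?_
  simp only [List.length_ofFn]
  rw [sum_ite, sum_const_zero, add_zero, sum_const, card_filter_ofFn_mem, nsmul_eq_mul, mul_comm]
  exact fun l hl => ((mem_blockings ε).1 hl).2.2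

end Expansion

end CyclicTrace

open CyclicTrace

theorem combinatorial_lemma_coeff_general
    {A : Type*} [Ring A] [Algebra ℂ A] [StarRing A] [StarModule ℂ A]
    (τ : A →ₗ[ℂ] ℂ) (hτtr : ∀ x y : A, τ (x * y) = τ (y * x))
    (n : ℕ) (m : ℕ)
    (ε : Fin n → Bool) (x : Fin n → A)
    (a : Fin n → Matrix (Fin m) (Fin m) ℂ)
    (hcyc : ∀ σ : Equiv.Perm (Fin n),
      (m : ℂ)⁻¹ * Matrix.trace (List.ofFn (fun j => a (σ j))).prod =
        if ∃ c : Fin n, ∀ j : Fin n, σ j = j + c then 1 else 0) :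
    ∀ k : ℕ, ∃ P : MvPolynomial (Fin n ⊕ Fin n) ℂ,
      (∀ z : Fin n → ℂ,
        (m : ℂ)⁻¹ * ∑ i, τ
          (((star (1 + ∑ j, z j • matTensor (if ε j then star (a j) else a j) (x j)) *
              (1 + ∑ j, z j • matTensor (if ε j then star (a j) else a j) (x j)) - 1) ^ k) i i) =
          MvPolynomial.eval (Sum.elim z (fun j => conj (z j))) P) ∧
      MvPolynomial.coeff
          (∑ j : Fin n, Finsupp.single (if ε j then Sum.inr j else Sum.inl j) 1) P =
        τ (List.ofFn (fun j => if ε j then star (x j) else x j)).prod * k *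
          (if k ≤ n then
            ((((Finset.univ.filter fun j : Fin n =>
                ε j = true ∧ ε (finRotate n j) = false).card).choose (n - k) : ℂ))
          else 0) := by
  intro k
  refine ⟨expansion τ (starIf ε a) x k, fun z => (eval_expansion τ (starIf ε a) x k z).symm, ?_⟩
  refine (coeff_expansion ε x hτtr hcyc k).trans ?_
  rw [sum_card_blockings_rotWord, mul_assoc]
  push_cast
  -- `starIf` and `Joinable` unfold to the expressions of the statement
  rfl

/-- **Combinatorial lemma.**  Let `A` be a unital complex `*`-algebra with a tracial linear
functional `τ`.  Fix a sign pattern `ε ∈ {1, *}ⁿ` (`ε j = true` meaning `*`), elements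
`x₁, …, xₙ ∈ A` and matrices `a₁, …, aₙ ∈ M_m(ℂ)` with the cyclic trace property, and set
`S_z = 1 + Σ_j z_j (a_j^{ε_j} ⊗ x_j)`.  Then for every `k`, the function
`z ↦ (tr_m ⊗ τ)((S_z* S_z − 1)^k)` is a polynomial in `z, conj z`, and the coefficient of
`z^ε = ∏_j z_j^{ε_j}` equals `τ(x₁^{ε₁} ⋯ xₙ^{εₙ}) · k · binom(α(ε), n−k)`. -/
theorem combinatorial_lemma_coeff
    {A : Type*} [Ring A] [Algebra ℂ A] [StarRing A] [StarModule ℂ A]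
    (τ : A →ₗ[ℂ] ℂ) (hτtr : ∀ x y : A, τ (x * y) = τ (y * x))
    (n : ℕ) (hn : 1 ≤ n) (m : ℕ) (hm : 1 ≤ m)
    (ε : Fin n → Bool) (x : Fin n → A)
    (a : Fin n → Matrix (Fin m) (Fin m) ℂ)
    (hcyc : ∀ σ : Equiv.Perm (Fin n),
      (m : ℂ)⁻¹ * Matrix.trace (List.ofFn (fun j => a (σ j))).prod =
        if ∃ c : Fin n, ∀ j : Fin n, σ j = j + c then 1 else 0) :
    ∀ k : ℕ, ∃ P : MvPolynomial (Fin n ⊕ Fin n) ℂ,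
      (∀ z : Fin n → ℂ,
        (m : ℂ)⁻¹ * ∑ i, τ
          (((star (1 + ∑ j, z j • matTensor (if ε j then star (a j) else a j) (x j)) *
              (1 + ∑ j, z j • matTensor (if ε j then star (a j) else a j) (x j)) - 1) ^ k) i i) =
          MvPolynomial.eval (Sum.elim z (fun j => conj (z j))) P) ∧
      MvPolynomial.coeff
          (∑ j : Fin n, Finsupp.single (if ε j then Sum.inr j else Sum.inl j) 1) P =
        τ (List.ofFn (fun j => if ε j then star (x j) else x j)).prod * k *
          (if k ≤ n then
            ((((Finset.univ.filter fun j : Fin n =>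
                ε j = true ∧ ε (finRotate n j) = false).card).choose (n - k) : ℂ))
          else 0) :=
  combinatorial_lemma_coeff_general τ hτtr n m ε x a hcyc
end

section
/- Let N ≥ 1 and α ≥ 0 be integers with α ≤ N/2, and let p be a positive real number such that p is not an even integer or p ≥ 2(N−α). Then Σ_{k=0}^{α} (N−k) · binom(p/2, N−k) · binom(α, k) ≠ 0. -/
/-- The generalized binomial coefficient `binom(β, k) = β(β−1)⋯(β−k+1)/k!`. -/
noncomputable def genBinom (β : ℝ) (k : ℕ) : ℝ :=
  (∏ i ∈ Finset.range k, (β - i)) / (Nat.factorial k)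

lemma descPoch_smeval_prod (r : ℝ) (n : ℕ) :
    (descPochhammer ℤ n).smeval r = ∏ i ∈ Finset.range n, (r - i) := by
  induction n with
  | zero => simp [descPochhammer_zero]
  | succ n ih =>
    rw [descPochhammer_succ_right, Polynomial.smeval_mul, ih, Finset.prod_range_succ]
    congr 1
    simp [Polynomial.smeval_sub, Polynomial.smeval_X, Polynomial.smeval_natCast]

lemma genBinom_eq_choose (r : ℝ) (n : ℕ) : genBinom r n = Ring.choose r n := by
  have h := Ring.descPochhammer_eq_factorial_smul_choose r n
  rw [descPoch_smeval_prod] at h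
  have hf : (n.factorial : ℝ) ≠ 0 := Nat.cast_ne_zero.mpr (Nat.factorial_ne_zero n)
  unfold genBinom
  rw [h, nsmul_eq_mul]
  field_simp

lemma absorb (r : ℝ) (n : ℕ) :
    ((n : ℝ) + 1) * genBinom r (n + 1) = r * genBinom (r - 1) n := by
  unfold genBinom
  have h1 : ∏ i ∈ Finset.range (n + 1), (r - i) =
      (∏ i ∈ Finset.range n, (r - 1 - i)) * r := by
    rw [Finset.prod_range_succ']
    simp only [Nat.cast_add, Nat.cast_succ, Nat.cast_zero, sub_zero]
    congr 1
    apply Finset.prod_congr rfl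
    intro i _
    ring
  rw [h1, Nat.factorial_succ]
  have hf : (n.factorial : ℝ) ≠ 0 := Nat.cast_ne_zero.mpr (Nat.factorial_ne_zero n)
  have hf2 : ((n : ℝ) + 1) ≠ 0 := by positivity
  push_cast
  field_simp

/-- Let `N ≥ 1` and `α ≥ 0` be integers with `α ≤ N/2`, and let `p > 0` be a real number that
is not an even integer or satisfies `p ≥ 2(N − α)`.  Then
`Σ_{k=0}^{α} (N−k) · binom(p/2, N−k) · binom(α, k) ≠ 0`. -/
theorem sum_binomial_ne_zero
    (N α : ℕ) (hN : 1 ≤ N) (hα : 2 * α ≤ N)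
    (p : ℝ) (hp : 0 < p)
    (hcond : (∀ k : ℕ, p ≠ 2 * k) ∨ 2 * ((N : ℝ) - α) ≤ p) :
    ∑ k ∈ Finset.range (α + 1),
      ((N : ℝ) - k) * genBinom (p / 2) (N - k) * (α.choose k) ≠ 0 := by
  set x : ℝ := p / 2 with hxdef
  have hx : 0 < x := by rw [hxdef]; linarith
  have hαN : α < N := by omega
  have hstep : ∀ k ∈ Finset.range (α + 1),
      ((N : ℝ) - k) * genBinom x (N - k) * (α.choose k) =
      x * (genBinom (x - 1) (N - 1 - k) * (α.choose k)) := by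
    intro k hk
    rw [Finset.mem_range] at hk
    have h1 : N - k = (N - 1 - k) + 1 := by omega
    have h2 : ((N : ℝ) - k) = ((N - 1 - k : ℕ) : ℝ) + 1 := by
      have h3 : (N - 1 - k : ℕ) = N - (k + 1) := by omega
      rw [h3, Nat.cast_sub (by omega : k + 1 ≤ N)]
      push_cast
      ring
    rw [h1, h2, absorb]
    ring
  rw [Finset.sum_congr rfl hstep, ← Finset.mul_sum]
  apply mul_ne_zero (ne_of_gt hx)
  have hext : ∑ k ∈ Finset.range (α + 1), genBinom (x - 1) (N - 1 - k) * (α.choose k)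
      = ∑ k ∈ Finset.range ((N - 1) + 1), genBinom (x - 1) (N - 1 - k) * (α.choose k) := by
    apply Finset.sum_subset
    · exact Finset.range_subset_range.mpr (by omega)
    · intro k _ hk
      rw [Finset.mem_range, not_lt] at hk
      have : α.choose k = 0 := Nat.choose_eq_zero_of_lt (by omega)
      simp [this]
  rw [hext]
  have hvdM : ∑ k ∈ Finset.range ((N - 1) + 1), genBinom (x - 1) (N - 1 - k) * (α.choose k)
      = genBinom (x - 1 + α) (N - 1) := by
    have h := Ring.add_choose_eq (r := (α : ℝ)) (s := x - 1) (N - 1) (Commute.all _ _)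
    rw [Finset.Nat.sum_antidiagonal_eq_sum_range_succ_mk] at h
    rw [genBinom_eq_choose]
    have hc : x - 1 + (α : ℝ) = (α : ℝ) + (x - 1) := by ring
    rw [hc, h]
    apply Finset.sum_congr rfl
    intro k _
    rw [genBinom_eq_choose, Ring.choose_natCast]
    ring
  rw [hvdM]
  unfold genBinom
  apply div_ne_zero
  · apply Finset.prod_ne_zero_iff.mpr
    intro i hi
    rw [Finset.mem_range] at hi
    rcases hcond with hirr | hge
    · intro h0
      by_cases hiα : α ≤ i + 1
      · apply hirr (i + 1 - α)
        have hc : ((i + 1 - α : ℕ) : ℝ) = (i : ℝ) + 1 - α := by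
          rw [Nat.cast_sub hiα]; push_cast; ring
        rw [hc]
        have : p = 2 * x := by rw [hxdef]; ring
        rw [this]
        linarith
      · push_neg at hiα
        have : ((i : ℝ)) + 1 ≤ (α : ℝ) - 1 + 1 := by
          have : i + 2 ≤ α := by omega
          have := (Nat.cast_le (α := ℝ)).mpr this
          push_cast at this
          linarith
        linarith
    · intro h0
      have hxge : (N : ℝ) - α ≤ x := by rw [hxdef]; linarith
      have hiN : (i : ℝ) + 2 ≤ N := by
        have : i + 2 ≤ N := by omega
        have := (Nat.cast_le (α := ℝ)).mpr this
        push_cast at this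
        linarith
      linarith
  · exact Nat.cast_ne_zero.mpr (Nat.factorial_ne_zero _)
end

section
/- Let A be a bounded operator on a complex Hilbert space H and let p ≥ 1 be a real number. Then |1+A|^p + |1−A|^p + |1+A*|^p + |1−A*|^p ≥ 4·Id in the order of self-adjoint operators, where for a bounded operator T, |T| = (T*T)^{1/2} and |T|^p is defined by the continuous functional calculus applied to the positive operator |T|. -/
/-- `|T|^p` for a bounded operator `T` on a Hilbert space: `|T| = (T*T)^{1/2}` and `|T|^p` is
defined by the continuous functional calculus applied to the positive operator `|T|`. -/
noncomputable def opAbsPow {H : Type*} [NormedAddCommGroup H] [InnerProductSpace ℂ H]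
    [CompleteSpace H] (T : H →L[ℂ] H) (p : ℝ) : H →L[ℂ] H :=
  cfc (fun t : ℝ => t ^ p) (cfc Real.sqrt (star T * T))

/-!
Bernoulli's inequality `t ^ p ≥ p t - (p - 1)` for `t ≥ 0` passes through the functional
calculus to `|T|^p ≥ p |T| - (p - 1)`, so it suffices that
`|1+A| + |1-A| + |1+A*| + |1-A*| ≥ 4`. This is the sum of the inequalities
`T + T* ≤ |T| + |T*|` for `T = 1 ± A`.

For the latter, let `s = |T| + ε` and `b = s⁻¹`. Expanding `(T b - 1) s (T b - 1)* ≥ 0` gives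
`T + T* ≤ T b T* + s`, while `(T b T*)² = T (b |T|² b) T* ≤ T T* = |T*|²`, hence
`T b T* ≤ |T*|` by operator monotonicity of the square root. Finally let `ε → 0`.
-/

open CFC Filter Topology Ring

section CStarAlgebra

variable {A : Type*} [CStarAlgebra A] [PartialOrder A] [StarOrderedRing A]

lemma abs_eq_cfc_real_sqrt (a : A) : abs a = cfc Real.sqrt (star a * a) := by
  rw [CFC.abs, sqrt_eq_real_sqrt _ (star_mul_self_nonneg a), cfcₙ_eq_cfc]

lemma le_of_forall_pos_le_add_smul_one {x y : A} (h : ∀ ε : ℝ, 0 < ε → x ≤ y + ε • 1) :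
    x ≤ y := by
  have hlim : Tendsto (fun ε : ℝ => y + ε • (1 : A)) (𝓝[>] 0) (𝓝 y) := by
    have : Continuous (fun ε : ℝ => y + ε • (1 : A)) := by fun_prop
    simpa using (this.tendsto 0).mono_left nhdsWithin_le_nhds
  exact ge_of_tendsto hlim (eventually_nhdsWithin_of_forall h)

lemma le_of_mul_self_le_mul_self {x y : A} (hx : 0 ≤ x) (hy : 0 ≤ y) (h : x * x ≤ y * y) :
    x ≤ y := by
  simpa only [sqrt_mul_self x hx, sqrt_mul_self y hy] using sqrt_le_sqrt _ _ h

lemma add_star_le_abs_add_abs_star_add_smul_one (a : A) {ε : ℝ} (hε : 0 < ε) :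
    a + star a ≤ abs a + abs (star a) + ε • 1 := by
  set s := abs a + ε • (1 : A)
  have hs : IsStrictlyPositive s := (isStrictlyPositive_one.smul hε).nonneg_add (abs_nonneg a)
  set b := s⁻¹ʳ
  have hb : IsStrictlyPositive b := hs.ringInverse
  have hb_star : star b = b := hb.isSelfAdjoint.star_eq
  have hbs : b * s = 1 := inverse_mul_cancel s hs.isUnit
  have hsb : s * b = 1 := mul_inverse_cancel s hs.isUnit
  have h_square : a + star a ≤ a * b * star a + s := by
    have key := star_right_conjugate_nonneg hs.nonneg (a * b - 1)
    have : (a * b - 1) * s * star (a * b - 1) = a * b * star a + s - (a + star a) := by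
      rw [star_sub, star_mul, star_one, hb_star]
      calc (a * b - 1) * s * (b * star a - 1)
          = a * (b * s) * b * star a - a * (b * s) - s * b * star a + s := by noncomm_ring
        _ = a * b * star a + s - (a + star a) := by rw [hbs, hsb]; noncomm_ring
    rwa [this, sub_nonneg] at key
  have h_abs_sq : abs a * abs a ≤ s * s := by
    have : s * s = abs a * abs a + ε • (abs a + s) := by
      simp only [s, add_mul, mul_add, smul_mul_assoc, mul_smul_comm, one_mul, mul_one, smul_add]
      abel
    rw [this]
    exact le_add_of_nonneg_right (smul_nonneg hε.le (add_nonneg (abs_nonneg a) hs.nonneg))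
  have h_contract : b * (star a * a) * b ≤ 1 := by
    calc b * (star a * a) * b = star b * (abs a * abs a) * b := by rw [abs_mul_abs, hb_star]
      _ ≤ star b * (s * s) * b := star_left_conjugate_le_conjugate h_abs_sq b
      _ = 1 := by rw [hb_star, ← mul_assoc, hbs, one_mul, hsb]
  have h_bound : a * b * star a ≤ abs (star a) := by
    refine le_of_mul_self_le_mul_self (star_right_conjugate_nonneg hb.nonneg a) (abs_nonneg _) ?_
    calc a * b * star a * (a * b * star a) = a * (b * (star a * a) * b) * star a := by
          noncomm_ring
      _ ≤ a * 1 * star a := star_right_conjugate_le_conjugate h_contract a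
      _ = abs (star a) * abs (star a) := by rw [abs_mul_abs, star_star, mul_one]
  calc a + star a ≤ a * b * star a + s := h_square
    _ ≤ abs (star a) + s := add_le_add_left h_bound s
    _ = abs a + abs (star a) + ε • 1 := by unfold s; abel

theorem add_star_le_abs_add_abs_star (a : A) : a + star a ≤ abs a + abs (star a) :=
  le_of_forall_pos_le_add_smul_one fun _ hε => add_star_le_abs_add_abs_star_add_smul_one a hε

lemma four_smul_one_le_sum_abs (a : A) :
    4 • (1 : A) ≤ abs (1 + a) + abs (1 - a) + abs (1 + star a) + abs (1 - star a) := by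
  have h_add := add_star_le_abs_add_abs_star (1 + a)
  have h_sub := add_star_le_abs_add_abs_star (1 - a)
  simp only [star_add, star_sub, star_one] at h_add h_sub
  calc 4 • (1 : A) = (1 + a + (1 + star a)) + (1 - a + (1 - star a)) := by abel
    _ ≤ (abs (1 + a) + abs (1 + star a)) + (abs (1 - a) + abs (1 - star a)) :=
        add_le_add h_add h_sub
    _ = abs (1 + a) + abs (1 - a) + abs (1 + star a) + abs (1 - star a) := by abel

lemma smul_sub_smul_one_le_cfc_rpow {a : A} (ha : 0 ≤ a) {p : ℝ} (hp : 1 ≤ p) :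
    p • a - (p - 1) • 1 ≤ cfc (fun t : ℝ => t ^ p) a := by
  have hcont : ContinuousOn (fun t : ℝ => t ^ p) (spectrum ℝ a) := fun x _ =>
    (Real.continuousAt_rpow_const x p (Or.inr (by linarith))).continuousWithinAt
  have h_affine : p • a - (p - 1) • (1 : A) = cfc (fun t : ℝ => p * t - (p - 1)) a := by
    rw [cfc_sub (fun t : ℝ => p * t) (fun _ : ℝ => p - 1) a,
      cfc_const_mul p (fun t : ℝ => t) a, cfc_id' ℝ a, cfc_const (p - 1) a,
      Algebra.algebraMap_eq_smul_one]
  rw [h_affine]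
  refine cfc_mono (hg := hcont) fun x hx => ?_
  have hx₀ : (-1 : ℝ) ≤ x - 1 := by linarith [spectrum_nonneg_of_nonneg ha hx]
  have h_bernoulli := one_add_mul_self_le_rpow_one_add hx₀ hp
  rw [add_sub_cancel] at h_bernoulli
  linarith

theorem four_smul_one_le_sum_cfc_rpow_abs (a : A) {p : ℝ} (hp : 1 ≤ p) :
    4 • (1 : A) ≤
      cfc (fun t : ℝ => t ^ p) (abs (1 + a)) + cfc (fun t : ℝ => t ^ p) (abs (1 - a)) +
        cfc (fun t : ℝ => t ^ p) (abs (1 + star a)) +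
        cfc (fun t : ℝ => t ^ p) (abs (1 - star a)) := by
  have tangent (b : A) := smul_sub_smul_one_le_cfc_rpow (abs_nonneg b) hp
  calc 4 • (1 : A) = p • (4 • 1 : A) - (4 * (p - 1)) • 1 := by module
    _ ≤ p • (abs (1 + a) + abs (1 - a) + abs (1 + star a) + abs (1 - star a)) -
          (4 * (p - 1)) • 1 := by
        gcongr
        exact four_smul_one_le_sum_abs a
    _ = (p • abs (1 + a) - (p - 1) • 1) + (p • abs (1 - a) - (p - 1) • 1) +
          (p • abs (1 + star a) - (p - 1) • 1) + (p • abs (1 - star a) - (p - 1) • 1) := by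
        module
    _ ≤ _ := by gcongr <;> exact tangent _

end CStarAlgebra

/-- For every bounded operator `A` on a complex Hilbert space and every real `p ≥ 1`,
`|1+A|^p + |1−A|^p + |1+A*|^p + |1−A*|^p ≥ 4` in the Loewner order. -/
theorem four_le_sum_abs_pow
    {H : Type*} [NormedAddCommGroup H] [InnerProductSpace ℂ H] [CompleteSpace H]
    (A : H →L[ℂ] H) (p : ℝ) (hp : 1 ≤ p) :
    4 • (1 : H →L[ℂ] H) ≤
      opAbsPow (1 + A) p + opAbsPow (1 - A) p +
        opAbsPow (1 + star A) p + opAbsPow (1 - star A) p := by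
  simpa only [opAbsPow, ← abs_eq_cfc_real_sqrt] using four_smul_one_le_sum_cfc_rpow_abs A hp
end

section
/- Let R be a *-ring (a ring with an involution *) and let a ∈ R satisfy a² = 0. Set a_1 = a*a + a + a*, a_2 = a*a − a − a*, a_3 = aa* + a + a*, a_4 = aa* − a − a*. Define polynomials P_m ∈ ℤ[X] by P_1 = X, P_2 = X² + 2X, and P_{m+2} = X·(P_{m+1} + P_m) for m ≥ 1. Then for every integer m ≥ 1, a_1^m + a_2^m + a_3^m + a_4^m = 2·P_m(a*a) + 2·P_m(aa*). Moreover, for every real t ≥ 0, P_m(t) = ((t + √(t²+4t))/2)^m + ((t − √(t²+4t))/2)^m. -/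
open Polynomial

/-- The polynomials `P₁ = X`, `P₂ = X² + 2X`, `P_{m+2} = X·(P_{m+1} + P_m)`. -/
noncomputable def Ppoly : ℕ → Polynomial ℤ
  | 0 => 0
  | 1 => Polynomial.X
  | 2 => Polynomial.X ^ 2 + 2 * Polynomial.X
  | (m + 3) => Polynomial.X * (Ppoly (m + 2) + Ppoly (m + 1))

noncomputable def fpoly : ℕ → Polynomial ℤ
  | 0 => 1
  | 1 => Polynomial.X
  | (m + 2) => Polynomial.X * (fpoly (m + 1) + fpoly m)

noncomputable def gpoly : ℕ → Polynomial ℤ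
  | 0 => 0
  | (m + 1) => fpoly m

lemma fpoly_succ (m : ℕ) : fpoly (m + 1) = Polynomial.X * (fpoly m + gpoly m) := by
  cases m with
  | zero => simp [fpoly, gpoly]
  | succ k => simp [fpoly, gpoly]

lemma fpoly_coeff_zero (m : ℕ) : (fpoly (m + 1)).coeff 0 = 0 := by
  rw [fpoly_succ]
  simp [Polynomial.mul_coeff_zero]

lemma Ppoly_eq (m : ℕ) : Ppoly (m + 1) = fpoly (m + 1) + Polynomial.X * gpoly m := by
  have key : ∀ n, (Ppoly (n + 1) = fpoly (n + 1) + Polynomial.X * gpoly n) ∧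
      (Ppoly (n + 2) = fpoly (n + 2) + Polynomial.X * gpoly (n + 1)) := by
    intro n
    induction n with
    | zero =>
      constructor
      · show Ppoly 1 = fpoly 1 + Polynomial.X * gpoly 0
        simp [Ppoly, fpoly, gpoly]
      · show Ppoly 2 = fpoly 2 + Polynomial.X * gpoly 1
        show Polynomial.X ^ 2 + 2 * Polynomial.X =
          Polynomial.X * (fpoly 1 + fpoly 0) + Polynomial.X * fpoly 0
        show Polynomial.X ^ 2 + 2 * Polynomial.X =
          Polynomial.X * (Polynomial.X + 1) + Polynomial.X * 1
        ring
    | succ k ih =>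
      refine ⟨ih.2, ?_⟩
      show Ppoly (k + 3) = fpoly (k + 3) + Polynomial.X * gpoly (k + 2)
      rw [show Ppoly (k + 3) = Polynomial.X * (Ppoly (k + 2) + Ppoly (k + 1)) from rfl,
        ih.1, ih.2,
        show fpoly (k + 3) = Polynomial.X * (fpoly (k + 2) + fpoly (k + 1)) from rfl,
        show gpoly (k + 2) = fpoly (k + 1) from rfl,
        show gpoly (k + 1) = fpoly k from rfl]
      linear_combination -(Polynomial.X : Polynomial ℤ) * (fpoly_succ k)
  exact (key m).1

lemma key_pow {R : Type*} [Ring R] [StarRing R] (a : R) (ha : a ^ 2 = 0) (m : ℕ) :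
    (star a * a + a + star a) ^ (m + 1) =
      aeval (star a * a) (fpoly (m + 1)) + aeval (star a * a) (fpoly m) * star a +
      a * aeval (star a * a) (fpoly m) + a * aeval (star a * a) (gpoly m) * star a := by
  have hstar : (star a) ^ 2 = 0 := by rw [← star_pow, ha, star_zero]
  have haa : a * a = 0 := by rw [← pow_two, ha]
  have hss : star a * star a = 0 := by rw [← pow_two, hstar]
  have hba : (star a * a) * a = 0 := by rw [mul_assoc, haa, mul_zero]
  have hsb : star a * (star a * a) = 0 := by rw [← mul_assoc, hss, zero_mul]
  have hEb : ∀ p : Polynomial ℤ, aeval (star a * a) p * (star a * a)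
      = aeval (star a * a) (p * Polynomial.X) := by
    intro p; rw [map_mul, aeval_X]
  have hEa : ∀ p : Polynomial ℤ, aeval (star a * a) p * a = ((p.coeff 0 : ℤ) : R) * a := by
    intro p
    conv_lhs => rw [← p.divX_mul_X_add]
    rw [map_add, map_mul, aeval_X, aeval_C, add_mul, mul_assoc, hba, mul_zero, zero_add]
    simp [algebraMap_int_eq]
  induction m with
  | zero =>
    simp only [zero_add, pow_one, fpoly, gpoly, aeval_X, aeval_one, one_mul, mul_one,
      map_zero, mul_zero, zero_mul, add_zero]
    abel
  | succ k ih =>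
    rw [pow_succ, ih]
    have h1 : aeval (star a * a) (fpoly (k + 1)) * (star a * a + a + star a) =
        aeval (star a * a) (fpoly (k + 1) * Polynomial.X) +
          aeval (star a * a) (fpoly (k + 1)) * star a := by
      rw [mul_add, mul_add, hEb, hEa, fpoly_coeff_zero]
      simp
    have h2 : (aeval (star a * a) (fpoly k) * star a) * (star a * a + a + star a) =
        aeval (star a * a) (fpoly k * Polynomial.X) := by
      rw [mul_add, mul_add, mul_assoc, hsb, mul_zero, mul_assoc, hEb, mul_assoc, hss, mul_zero,
        add_zero, zero_add]
    have hca : ∀ c : ℤ, a * ((c : R) * a) = 0 := by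
      intro c
      rw [← mul_assoc, ← Int.cast_comm, mul_assoc, haa, mul_zero]
    have h3 : (a * aeval (star a * a) (fpoly k)) * (star a * a + a + star a) =
        a * aeval (star a * a) (fpoly k * Polynomial.X) +
          a * aeval (star a * a) (fpoly k) * star a := by
      rw [mul_add, mul_add, mul_assoc, hEb, mul_assoc a _ a, hEa, hca]
      simp [mul_assoc]
    have h4 : (a * aeval (star a * a) (gpoly k) * star a) * (star a * a + a + star a) =
        a * aeval (star a * a) (gpoly k * Polynomial.X) := by
      rw [mul_add, mul_add, mul_assoc _ (star a) (star a * a), hsb, mul_zero,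
        mul_assoc _ (star a) a, mul_assoc a _ (star a * a), hEb,
        mul_assoc _ (star a) (star a), hss, mul_zero, add_zero, zero_add]
    rw [add_mul, add_mul, add_mul, h1, h2, h3, h4]
    have e1 : aeval (star a * a) (fpoly (k + 1) * Polynomial.X) +
        aeval (star a * a) (fpoly k * Polynomial.X) = aeval (star a * a) (fpoly (k + 2)) := by
      rw [← map_add]
      congr 1
      show fpoly (k + 1) * Polynomial.X + fpoly k * Polynomial.X =
        Polynomial.X * (fpoly (k + 1) + fpoly k)
      ring
    have e2 : a * aeval (star a * a) (fpoly k * Polynomial.X) +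
        a * aeval (star a * a) (gpoly k * Polynomial.X) =
        a * aeval (star a * a) (fpoly (k + 1)) := by
      rw [← mul_add, ← map_add, fpoly_succ]
      congr 2
      ring
    rw [show gpoly (k + 1) = fpoly k from rfl]
    calc aeval (star a * a) (fpoly (k + 1) * Polynomial.X) +
          aeval (star a * a) (fpoly (k + 1)) * star a +
          aeval (star a * a) (fpoly k * Polynomial.X) +
          (a * aeval (star a * a) (fpoly k * Polynomial.X) +
            a * aeval (star a * a) (fpoly k) * star a) +
          a * aeval (star a * a) (gpoly k * Polynomial.X)
        = (aeval (star a * a) (fpoly (k + 1) * Polynomial.X) +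
            aeval (star a * a) (fpoly k * Polynomial.X)) +
          aeval (star a * a) (fpoly (k + 1)) * star a +
          (a * aeval (star a * a) (fpoly k * Polynomial.X) +
            a * aeval (star a * a) (gpoly k * Polynomial.X)) +
          a * aeval (star a * a) (fpoly k) * star a := by abel
      _ = aeval (star a * a) (fpoly (k + 2)) + aeval (star a * a) (fpoly (k + 1)) * star a +
          a * aeval (star a * a) (fpoly (k + 1)) +
          a * aeval (star a * a) (fpoly k) * star a := by rw [e1, e2]

lemma twist {R : Type*} [Ring R] [StarRing R] (a : R) (ha : a ^ 2 = 0) (p : Polynomial ℤ) :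
    a * aeval (star a * a) p * star a = aeval (a * star a) (Polynomial.X * p) := by
  have hpow : ∀ n : ℕ, a * (star a * a) ^ n = (a * star a) ^ n * a := by
    intro n
    induction n with
    | zero => simp
    | succ k ih =>
      rw [pow_succ, ← mul_assoc, ih, mul_assoc, pow_succ, mul_assoc, mul_assoc, ← mul_assoc]
  induction p using Polynomial.induction_on' with
  | add p q hp hq =>
    rw [map_add, mul_add, add_mul, hp, hq, mul_add, map_add]
  | monomial n c =>
    rw [aeval_monomial, show Polynomial.X * Polynomial.monomial n c =
      Polynomial.monomial (n + 1) c from by rw [Polynomial.X_mul_monomial], aeval_monomial]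
    simp only [algebraMap_int_eq, eq_intCast]
    rw [← mul_assoc, ← Int.cast_comm, mul_assoc, mul_assoc]
    congr 1
    rw [← mul_assoc, hpow, mul_assoc, ← pow_succ]

lemma Preal (t : ℝ) (ht : 0 ≤ t) (m : ℕ) :
    Polynomial.eval₂ (Int.castRingHom ℝ) t (Ppoly (m + 1)) =
      ((t + Real.sqrt (t ^ 2 + 4 * t)) / 2) ^ (m + 1) +
        ((t - Real.sqrt (t ^ 2 + 4 * t)) / 2) ^ (m + 1) := by
  set s := Real.sqrt (t ^ 2 + 4 * t) with hsdef
  have hs : s ^ 2 = t ^ 2 + 4 * t := Real.sq_sqrt (by nlinarith)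
  have hp : ((t + s) / 2) ^ 2 = t * ((t + s) / 2) + t := by linear_combination hs / 4
  have hq : ((t - s) / 2) ^ 2 = t * ((t - s) / 2) + t := by linear_combination hs / 4
  have e1 : ∀ x : ℝ, x ^ 2 = t * x + t → ∀ k : ℕ, x ^ (k + 3) = t * x ^ (k + 2) + t * x ^ (k + 1) := by
    intro x hx k
    have h : x ^ (k + 3) = x ^ (k + 1) * x ^ 2 := by ring
    rw [h, hx]; ring
  have key : ∀ n : ℕ,
      (Polynomial.eval₂ (Int.castRingHom ℝ) t (Ppoly (n + 1)) =
        ((t + s) / 2) ^ (n + 1) + ((t - s) / 2) ^ (n + 1)) ∧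
      (Polynomial.eval₂ (Int.castRingHom ℝ) t (Ppoly (n + 2)) =
        ((t + s) / 2) ^ (n + 2) + ((t - s) / 2) ^ (n + 2)) := by
    intro n
    induction n with
    | zero =>
      constructor
      · show Polynomial.eval₂ (Int.castRingHom ℝ) t Polynomial.X = _
        rw [Polynomial.eval₂_X]; ring
      · show Polynomial.eval₂ (Int.castRingHom ℝ) t
          (Polynomial.X ^ 2 + 2 * Polynomial.X) = _
        simp only [Polynomial.eval₂_add, Polynomial.eval₂_mul, Polynomial.eval₂_pow,
          Polynomial.eval₂_X, Polynomial.eval₂_ofNat]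
        linear_combination -hs / 2
    | succ k ih =>
      refine ⟨ih.2, ?_⟩
      show Polynomial.eval₂ (Int.castRingHom ℝ) t (Ppoly (k + 3)) = _
      rw [show Ppoly (k + 3) = Polynomial.X * (Ppoly (k + 2) + Ppoly (k + 1)) from rfl]
      rw [Polynomial.eval₂_mul, Polynomial.eval₂_add, Polynomial.eval₂_X, ih.1, ih.2,
        e1 _ hp k, e1 _ hq k]
      ring
  exact (key m).1

/-- Let `R` be a `*`-ring and `a ∈ R` with `a² = 0`.  With
`a₁ = a*a + a + a*`, `a₂ = a*a − a − a*`, `a₃ = aa* + a + a*`, `a₄ = aa* − a − a*`, one has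
`a₁^m + a₂^m + a₃^m + a₄^m = 2·P_m(a*a) + 2·P_m(aa*)` for all `m ≥ 1`; moreover for every
real `t ≥ 0`, `P_m(t) = ((t + √(t²+4t))/2)^m + ((t − √(t²+4t))/2)^m`. -/
theorem sum_powers_eq_Ppoly
    {R : Type*} [Ring R] [StarRing R] (a : R) (ha : a ^ 2 = 0) (m : ℕ) (hm : 1 ≤ m) :
    ((star a * a + a + star a) ^ m + (star a * a - a - star a) ^ m +
      (a * star a + a + star a) ^ m + (a * star a - a - star a) ^ m =
        2 * Polynomial.eval₂ (Int.castRingHom R) (star a * a) (Ppoly m) +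
          2 * Polynomial.eval₂ (Int.castRingHom R) (a * star a) (Ppoly m)) ∧
    (∀ t : ℝ, 0 ≤ t →
      Polynomial.eval₂ (Int.castRingHom ℝ) t (Ppoly m) =
        ((t + Real.sqrt (t ^ 2 + 4 * t)) / 2) ^ m +
          ((t - Real.sqrt (t ^ 2 + 4 * t)) / 2) ^ m) := by
  obtain ⟨k, rfl⟩ : ∃ k, m = k + 1 := ⟨m - 1, (Nat.succ_pred_eq_of_pos hm).symm⟩
  constructor
  · have hstar : (star a) ^ 2 = 0 := by rw [← star_pow, ha, star_zero]
    have hna : (-a) ^ 2 = 0 := by rw [neg_pow]; simp [ha]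
    have hns : (-star a) ^ 2 = 0 := by rw [neg_pow]; simp [hstar]
    have h1 := key_pow a ha k
    have h2 := key_pow (-a) hna k
    have h3 := key_pow (star a) hstar k
    have h4 := key_pow (-star a) hns k
    have eb2 : star a * a - a - star a = star (-a) * (-a) + (-a) + star (-a) := by
      simp only [star_neg, neg_mul_neg, sub_eq_add_neg]
    have eb3 : a * star a + a + star a = star (star a) * star a + star a + star (star a) := by
      simp only [star_star]; abel
    have eb4 : a * star a - a - star a =
        star (-star a) * (-star a) + (-star a) + star (-star a) := by
      simp only [star_neg, star_star, neg_mul_neg, sub_eq_add_neg]; abel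
    have hcast : ∀ (x : R) (p : Polynomial ℤ),
        Polynomial.eval₂ (Int.castRingHom R) x p = aeval x p := by
      intro x p; rw [aeval_def, algebraMap_int_eq]
    rw [eb2, eb3, eb4, h1, h2, h3, h4, hcast, hcast]
    simp only [star_neg, star_star, mul_neg, neg_mul, neg_neg]
    have tw1 : a * aeval (star a * a) (gpoly k) * star a =
        aeval (a * star a) (Polynomial.X * gpoly k) := twist a ha _
    have tw2 : star a * aeval (a * star a) (gpoly k) * a =
        aeval (star a * a) (Polynomial.X * gpoly k) := by
      simpa using twist (star a) hstar (gpoly k)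
    rw [tw1, tw2, Ppoly_eq, map_add, map_add, two_mul, two_mul]
    abel
  · intro t ht
    exact Preal t ht k
end

section
/- Let a, b, c, d be continuous real-valued functions on [0,∞) such that a(t) > 0, c(t) < 0 and d(t) > 0 for all t > 0. Let y be a C² real-valued function on [0,∞) satisfying a(t)·y''(t) + b(t)·y'(t) + c(t)·y(t) = d(t) for all t > 0, and suppose there is t₀ > 0 with y(t₀) > 0 and y'(t₀) > 0. Then y(t) > 0 for all t ≥ t₀. -/
/-- **Qualitative ODE lemma.** Let `a, b, c, d` be continuous on `[0, ∞)` with `a > 0`,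
`c < 0` and `d > 0` on `(0, ∞)`.  If `y` is `C²` on `[0, ∞)`, satisfies
`a y'' + b y' + c y = d` on `(0, ∞)`, and `y(t₀) > 0`, `y'(t₀) > 0` for some `t₀ > 0`, then
`y(t) > 0` for all `t ≥ t₀`. -/
theorem ode_positivity
    (a b c d : ℝ → ℝ)
    (ha_cont : ContinuousOn a (Set.Ici 0)) (hb_cont : ContinuousOn b (Set.Ici 0))
    (hc_cont : ContinuousOn c (Set.Ici 0)) (hd_cont : ContinuousOn d (Set.Ici 0))
    (ha_pos : ∀ t : ℝ, 0 < t → 0 < a t)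
    (hc_neg : ∀ t : ℝ, 0 < t → c t < 0)
    (hd_pos : ∀ t : ℝ, 0 < t → 0 < d t)
    (y y' y'' : ℝ → ℝ)
    (hy_cont : ContinuousOn y (Set.Ici 0))
    (hy'_cont : ContinuousOn y' (Set.Ici 0))
    (hy''_cont : ContinuousOn y'' (Set.Ici 0))
    (hderiv : ∀ t : ℝ, 0 < t → HasDerivAt y (y' t) t)
    (hderiv' : ∀ t : ℝ, 0 < t → HasDerivAt y' (y'' t) t)
    (hode : ∀ t : ℝ, 0 < t → a t * y'' t + b t * y' t + c t * y t = d t)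
    (t₀ : ℝ) (ht₀ : 0 < t₀) (hy₀ : 0 < y t₀) (hy'₀ : 0 < y' t₀) :
    ∀ t : ℝ, t₀ ≤ t → 0 < y t := by
  by_contra h
  push_neg at h
  obtain ⟨t₁, ht₁, hy₁⟩ := h
  set S : Set ℝ := {t | t₀ ≤ t ∧ (y t ≤ 0 ∨ y' t ≤ 0)} with hSdef
  have hne : S.Nonempty := ⟨t₁, ht₁, Or.inl hy₁⟩
  have hbdd : BddBelow S := ⟨t₀, fun t ht => ht.1⟩
  set s : ℝ := sInf S with hsdef
  have hs_le : t₀ ≤ s := le_csInf hne (fun t ht => ht.1)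
  have hs_cl : s ∈ closure S := csInf_mem_closure hne hbdd
  have hs0 : 0 < s := lt_of_lt_of_le ht₀ hs_le
  -- at s, y s ≤ 0 or y' s ≤ 0
  have hs_mem : y s ≤ 0 ∨ y' s ≤ 0 := by
    by_contra hcon
    push_neg at hcon
    obtain ⟨h1, h2⟩ := hcon
    have hcy : ContinuousAt y s := (hderiv s hs0).continuousAt
    have hcy' : ContinuousAt y' s := (hderiv' s hs0).continuousAt
    have hev : ∀ᶠ t in nhds s, 0 < y t ∧ 0 < y' t :=
      (continuousAt_const.eventually_lt hcy h1).and
        (continuousAt_const.eventually_lt hcy' h2)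
    obtain ⟨U, hU, hUnhds⟩ := Filter.eventually_iff_exists_mem.mp hev
    obtain ⟨t, htU, htS⟩ := mem_closure_iff_nhds.mp hs_cl U hU
    rcases htS.2 with h | h
    · exact absurd (hUnhds t htU).1 (not_lt.mpr h)
    · exact absurd (hUnhds t htU).2 (not_lt.mpr h)
  have hs_ne : t₀ ≠ s := by
    intro heq
    rw [← heq] at hs_mem
    rcases hs_mem with h | h
    · exact absurd hy₀ (not_lt.mpr h)
    · exact absurd hy'₀ (not_lt.mpr h)
  have hs_lt : t₀ < s := lt_of_le_of_ne hs_le hs_ne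
  -- on [t₀, s), y > 0 and y' > 0
  have hpos : ∀ t, t₀ ≤ t → t < s → 0 < y t ∧ 0 < y' t := by
    intro t ht1 ht2
    by_contra hcon
    push_neg at hcon
    have htS : t ∈ S := by
      refine ⟨ht1, ?_⟩
      rcases lt_or_ge 0 (y t) with h | h
      · exact Or.inr (hcon h)
      · exact Or.inl h
    exact absurd (csInf_le hbdd htS) (not_le.mpr ht2)
  -- y is strictly monotone on [t₀, s], so y s > 0
  have hmono : StrictMonoOn y (Set.Icc t₀ s) := by
    apply strictMonoOn_of_deriv_pos (convex_Icc t₀ s)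
    · intro t ht
      exact ((hderiv t (lt_of_lt_of_le ht₀ ht.1)).continuousAt).continuousWithinAt
    · intro t ht
      rw [interior_Icc] at ht
      rw [(hderiv t (lt_trans ht₀ ht.1)).deriv]
      exact (hpos t (le_of_lt ht.1) ht.2).2
  have hys : 0 < y s :=
    lt_trans hy₀ (hmono ⟨le_refl t₀, le_of_lt hs_lt⟩ ⟨le_of_lt hs_lt, le_refl s⟩ hs_lt)
  have hy's_le : y' s ≤ 0 := by
    rcases hs_mem with h | h
    · exact absurd hys (not_lt.mpr h)
    · exact h
  -- y' s ≥ 0 by left continuity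
  have hnb : (nhdsWithin s (Set.Ico t₀ s)).NeBot := by
    apply mem_closure_iff_nhdsWithin_neBot.mp
    rw [closure_Ico (ne_of_lt hs_lt)]
    exact ⟨le_of_lt hs_lt, le_refl s⟩
  have hy's_ge : 0 ≤ y' s := by
    have htend : Filter.Tendsto y' (nhdsWithin s (Set.Ico t₀ s)) (nhds (y' s)) :=
      ((hderiv' s hs0).continuousAt).continuousWithinAt
    refine ge_of_tendsto htend ?_
    filter_upwards [self_mem_nhdsWithin] with t ht
    exact le_of_lt (hpos t ht.1 ht.2).2
  have hy's : y' s = 0 := le_antisymm hy's_le hy's_ge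
  -- ODE gives y'' s > 0
  have hy''s : 0 < y'' s := by
    have h := hode s hs0
    rw [hy's, mul_zero] at h
    have : a s * y'' s = d s - c s * y s := by linarith
    have hrhs : 0 < d s - c s * y s := by
      have := hd_pos s hs0
      have := mul_neg_of_neg_of_pos (hc_neg s hs0) hys
      linarith
    have := ha_pos s hs0
    nlinarith
  -- slope contradiction
  have hslope : Filter.Tendsto (slope y' s) (nhdsWithin s {s}ᶜ) (nhds (y'' s)) :=
    hasDerivAt_iff_tendsto_slope.mp (hderiv' s hs0)
  have hev : ∀ᶠ t in nhdsWithin s {s}ᶜ, 0 < slope y' s t :=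
    hslope.eventually (eventually_gt_nhds hy''s)
  have hle : nhdsWithin s (Set.Iio s) ≤ nhdsWithin s {s}ᶜ :=
    nhdsWithin_mono s (fun t ht => ne_of_lt ht)
  have hIoo : Set.Ioo t₀ s ∈ nhdsWithin s (Set.Iio s) :=
    Ioo_mem_nhdsLT_of_mem ⟨hs_lt, le_refl s⟩
  have hfin : ∀ᶠ t in nhdsWithin s (Set.Iio s), False := by
    filter_upwards [hev.filter_mono hle, hIoo] with t hslopet ht
    have hy't : 0 < y' t := (hpos t (le_of_lt ht.1) ht.2).2
    rw [slope_def_field, hy's, sub_zero] at hslopet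
    have hts : t - s < 0 := sub_neg.mpr ht.2
    rcases div_pos_iff.mp hslopet with ⟨_, h2⟩ | ⟨h1, _⟩
    · linarith
    · linarith
  obtain ⟨t, ht⟩ := hfin.exists
  exact ht
end
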